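/- arXiv:2604.25202 — 2 statements merged into one kernel-verified Lean document; each statement's English description precedes it below -/
import Mathlib

section
/- Under the TA-CQR setup below, suppose: (Lip) for every x the map τ ↦ L_τ(x) is Lipschitz on [ε,α−ε] with constant M(x) and M̄ := E[M(X)] < ∞; (LD) there exist t > 0 and c > 0 such that for every x and every τ ∈ [ε,α−ε], f(y|x) ≥ c whenever |y − q_τ(x)| ≤ t or |y − q_{1−α+τ}(x)| ≤ t; the conformal rank k := ⌈(m+1)(1−α)⌉ satisfies k ≤ m; and the feasibility condition e + (δ_m(η) + 2/m)/(2c) ≤ t holds, where δ_m(η) := √(log(2/η)/(2m)) for η ∈ (0,1). Then with probability at least 1−η over the i.i.d. calibration sample, E_X |Ĉ(X)| ≤ E_X L*_ε(X) + M̄Δ + 4e + (δ_m(η) + 2/m)/c, where L*_ε(x) := min_{τ∈[ε,α−ε]} L_τ(x) and E_X is expectation over an independent test covariate X. -/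
open MeasureTheory Set Filter ProbabilityTheory
open scoped ENNReal

noncomputable section

section Helpers
open Real in

lemma bern_logmgf (p : ℝ) (hp0 : 0 ≤ p) (hp1 : p ≤ 1) (x : ℝ) :
    Real.log (1 - p + p * Real.exp x) ≤ p * x + x ^ 2 / 8 := by
  set D : ℝ → ℝ := fun y => 1 - p + p * Real.exp y with hDdef
  have hD : ∀ y, 0 < D y := by
    intro y
    rcases eq_or_lt_of_le hp0 with h | h
    · simp [hDdef, ← h]
    · have : 0 < p * Real.exp y := mul_pos h (Real.exp_pos y)
      have h1 : 0 ≤ 1 - p := by linarith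
      simp only [hDdef]; linarith
  set s : ℝ → ℝ := fun y => p * Real.exp y / D y with hsdef
  have hDderiv : ∀ y, HasDerivAt D (p * Real.exp y) y := by
    intro y
    exact ((Real.hasDerivAt_exp y).const_mul p).const_add (1 - p)
  have hsderiv : ∀ y, HasDerivAt s (s y * (1 - s y)) y := by
    intro y
    have h1 : HasDerivAt (fun z => p * Real.exp z) (p * Real.exp y) y :=
      (Real.hasDerivAt_exp y).const_mul p
    have := h1.div (hDderiv y) (hD y).ne'
    refine this.congr_deriv ?_
    have hne : D y ≠ 0 := (hD y).ne'
    simp only [hsdef]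
    field_simp
  have hs0 : s 0 = p := by simp [hsdef, hDdef]
  have hφ : Monotone (fun y => y / 4 - s y) := by
    apply monotone_of_deriv_nonneg
    · intro y; exact ((hasDerivAt_id y).div_const 4).sub (hsderiv y) |>.differentiableAt
    · intro y
      have hd : deriv (fun y => y / 4 - s y) y = 1 / 4 - s y * (1 - s y) :=
        (((hasDerivAt_id y).div_const 4).sub (hsderiv y)).deriv
      rw [hd]
      nlinarith [sq_nonneg (s y - 1 / 2)]
  have hsle : ∀ y, 0 ≤ y → s y ≤ p + y / 4 := by
    intro y hy
    have := hφ hy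
    simp only at this
    rw [hs0] at this; linarith
  have hsge : ∀ y, y ≤ 0 → p + y / 4 ≤ s y := by
    intro y hy
    have := hφ hy
    simp only at this
    rw [hs0] at this; linarith
  -- ψ y = p*y + y^2/8 - log (D y)
  set ψ : ℝ → ℝ := fun y => p * y + y ^ 2 / 8 - Real.log (D y) with hψdef
  have hψderiv : ∀ y, HasDerivAt ψ (p + y / 4 - s y) y := by
    intro y
    have hlog : HasDerivAt (fun z => Real.log (D z)) (p * Real.exp y / D y) y :=
      (hDderiv y).log (hD y).ne'
    have h1 : HasDerivAt (fun z => p * z + z ^ 2 / 8) (p + y * 2 / 8 * 1) y := by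
      have := ((hasDerivAt_id y).const_mul p).add (((hasDerivAt_id y).pow 2).div_const 8)
      refine this.congr_deriv ?_
      simp [mul_comm]
    have := h1.sub hlog
    refine this.congr_deriv ?_
    simp only [hsdef]
    ring
  have hψ0 : ψ 0 = 0 := by simp [hψdef, hDdef]
  have hψnonneg : ∀ y, 0 ≤ ψ y := by
    intro y
    rcases le_total 0 y with hy | hy
    · have hmono : MonotoneOn ψ (Set.Ici 0) := by
        apply monotoneOn_of_deriv_nonneg (convex_Ici 0)
        · exact Continuous.continuousOn (by
            have : ∀ z, DifferentiableAt ℝ ψ z := fun z => (hψderiv z).differentiableAt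
            exact (Differentiable.continuous this))
        · intro z _; exact (hψderiv z).differentiableAt.differentiableWithinAt
        · intro z hz
          rw [(hψderiv z).deriv]
          have hz' : 0 ≤ z := le_of_lt (by simpa using hz)
          have := hsle z hz'; linarith
      have := hmono (Set.self_mem_Ici) (by exact hy) hy
      rw [hψ0] at this; exact this
    · have hanti : AntitoneOn ψ (Set.Iic 0) := by
        apply antitoneOn_of_deriv_nonpos (convex_Iic 0)
        · exact Continuous.continuousOn (by
            have : ∀ z, DifferentiableAt ℝ ψ z := fun z => (hψderiv z).differentiableAt
            exact (Differentiable.continuous this))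
        · intro z _; exact (hψderiv z).differentiableAt.differentiableWithinAt
        · intro z hz
          rw [(hψderiv z).deriv]
          have hz' : z ≤ 0 := le_of_lt (by simpa using hz)
          have := hsge z hz'; linarith
      have := hanti (by exact hy) (Set.self_mem_Iic) hy
      rw [hψ0] at this; exact this
  have := hψnonneg x
  simp only [hψdef] at this
  linarith


lemma hoeff_conc {Ω : Type*} [MeasurableSpace Ω] (P : Measure Ω) [IsProbabilityMeasure P]
    (m : ℕ) (hm : 0 < m) (B : Fin m → Ω → ℝ) (U : Fin m → Set Ω)
    (hU : ∀ i, MeasurableSet (U i))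
    (hB : ∀ i, B i = (U i).indicator (fun _ => (1:ℝ)))
    (hind : iIndepFun B P)
    (p : ℝ) (hp : ∀ i, (P (U i)).toReal = p) (δ : ℝ) (hδ : 0 ≤ δ) :
    P {ω | (m:ℝ) * δ ≤ (m:ℝ) * p - ∑ i, B i ω} ≤
      ENNReal.ofReal (Real.exp (-2 * m * δ ^ 2)) := by
  classical
  have i0 : Fin m := ⟨0, hm⟩
  have hp0 : 0 ≤ p := by rw [← hp i0]; exact ENNReal.toReal_nonneg
  have hp1 : p ≤ 1 := by
    rw [← hp i0]
    exact ENNReal.toReal_le_of_le_ofReal one_pos.le (by simpa using prob_le_one)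
  have hBmeas : ∀ i, Measurable (B i) := by
    intro i; rw [hB i]; exact measurable_const.indicator (hU i)
  set W : Fin m → Ω → ℝ := fun i ω => p - B i ω with hWdef
  have hWmeas : ∀ i, Measurable (W i) := fun i => measurable_const.sub (hBmeas i)
  have hWind : iIndepFun W P := by
    have := hind.comp (fun _ (y : ℝ) => p - y) (fun _ => measurable_const.sub measurable_id)
    exact this
  have hBrange : ∀ i ω, B i ω = 0 ∨ B i ω = 1 := by
    intro i ω; rw [hB i]; by_cases h : ω ∈ U i <;> simp [Set.indicator_apply, h]
  -- mgf of each W i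
  have hmgf : ∀ (i : Fin m) (l : ℝ), mgf (W i) P l ≤ Real.exp (l ^ 2 / 8) := by
    intro i l
    have hpos : 0 < 1 - p + p * Real.exp (-l) := by
      rcases eq_or_lt_of_le hp0 with h | h
      · simp [← h]
      · have : 0 < p * Real.exp (-l) := mul_pos h (Real.exp_pos _)
        linarith
    have key : mgf (W i) P l = p * Real.exp (l * (p - 1)) + (1 - p) * Real.exp (l * p) := by
      have heq : (fun ω => Real.exp (l * W i ω)) =
          fun ω => (U i).indicator (fun _ => Real.exp (l * (p - 1)) - Real.exp (l * p)) ω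
            + Real.exp (l * p) := by
        funext ω
        rcases hBrange i ω with h | h
        · have hω : ω ∉ U i := by
            intro hmem; rw [hB i, Set.indicator_of_mem hmem] at h; simp at h
          simp [hWdef, h, Set.indicator_of_notMem hω]
        · have hω : ω ∈ U i := by
            by_contra hmem; rw [hB i, Set.indicator_of_notMem hmem] at h; simp at h
          simp [hWdef, h, Set.indicator_of_mem hω]
      rw [mgf, heq, integral_add ((integrable_const _).indicator (hU i)) (integrable_const _),
        integral_indicator_const _ (hU i), integral_const]
      simp [hp i, measure_univ]
      rw [measureReal_def, hp i]
      ring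
    rw [key]
    have hlog := bern_logmgf p hp0 hp1 (-l)
    have h2 : 1 - p + p * Real.exp (-l) ≤ Real.exp (p * (-l) + (-l) ^ 2 / 8) :=
      (Real.log_le_iff_le_exp hpos).mp hlog
    have e1 : Real.exp (l * p) * Real.exp (-l) = Real.exp (l * (p - 1)) := by
      rw [← Real.exp_add]; ring_nf
    have h3 : p * Real.exp (l * (p - 1)) + (1 - p) * Real.exp (l * p)
        = Real.exp (l * p) * (1 - p + p * Real.exp (-l)) := by
      rw [← e1]; ring
    rw [h3]
    calc Real.exp (l * p) * (1 - p + p * Real.exp (-l))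
        ≤ Real.exp (l * p) * Real.exp (p * (-l) + (-l) ^ 2 / 8) := by
          exact mul_le_mul_of_nonneg_left h2 (Real.exp_pos _).le
      _ = Real.exp (l ^ 2 / 8) := by rw [← Real.exp_add]; ring_nf
  -- the sum
  set X : Ω → ℝ := ∑ i, W i with hXdef
  have hXeq : ∀ ω, X ω = (m:ℝ) * p - ∑ i, B i ω := by
    intro ω
    simp only [hXdef, Finset.sum_apply, hWdef, Finset.sum_sub_distrib, Finset.sum_const,
      Finset.card_univ, Fintype.card_fin, nsmul_eq_mul]
  have hXmeas : Measurable X := by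
    rw [hXdef]
    have he : (∑ i, W i) = fun ω => ∑ i, W i ω := by funext ω; simp [Finset.sum_apply]
    rw [he]; exact Finset.measurable_sum _ fun i _ => hWmeas i
  have hXbd : ∀ ω, X ω ≤ (m:ℝ) * (|p| + 1) := by
    intro ω
    have : ∀ i, W i ω ≤ |p| + 1 := by
      intro i
      rcases hBrange i ω with h | h <;> simp [hWdef, h] <;> cases abs_cases p <;> linarith
    calc X ω = ∑ i, W i ω := by simp [hXdef]
      _ ≤ ∑ _i : Fin m, (|p| + 1) := Finset.sum_le_sum fun i _ => this i
      _ = (m:ℝ) * (|p| + 1) := by simp [Finset.sum_const, mul_comm]; ring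
  have hint : Integrable (fun ω => Real.exp (4 * δ * X ω)) P := by
    refine (integrable_const (Real.exp (4 * δ * ((m:ℝ) * (|p| + 1))))).mono'
      ((hXmeas.const_mul _).exp.aestronglyMeasurable) (ae_of_all _ fun ω => ?_)
    rw [Real.norm_eq_abs, abs_of_pos (Real.exp_pos _)]
    exact Real.exp_le_exp.mpr (mul_le_mul_of_nonneg_left (hXbd ω) (by positivity))
  have hcher := measure_ge_le_exp_mul_mgf (μ := P) (X := X) ((m:ℝ) * δ) (t := 4 * δ)
    (by positivity) hint
  have hmgfsum : mgf X P (4 * δ) ≤ Real.exp (2 * m * δ ^ 2) := by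
    rw [hXdef, hWind.mgf_sum hWmeas]
    calc ∏ i : Fin m, mgf (W i) P (4 * δ)
        ≤ ∏ _i : Fin m, Real.exp ((4 * δ) ^ 2 / 8) :=
          Finset.prod_le_prod (fun i _ => mgf_nonneg) (fun i _ => hmgf i (4 * δ))
      _ = Real.exp (2 * m * δ ^ 2) := by
          rw [Finset.prod_const, ← Real.exp_nat_mul]
          congr 1; simp [Finset.card_univ]; ring
  have hfinal : (P {ω | (m:ℝ) * δ ≤ X ω}).toReal ≤ Real.exp (-2 * m * δ ^ 2) := by
    calc (P {ω | (m:ℝ) * δ ≤ X ω}).toReal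
        ≤ Real.exp (-(4 * δ) * ((m:ℝ) * δ)) * mgf X P (4 * δ) := hcher
      _ ≤ Real.exp (-(4 * δ) * ((m:ℝ) * δ)) * Real.exp (2 * m * δ ^ 2) :=
          mul_le_mul_of_nonneg_left hmgfsum (Real.exp_pos _).le
      _ = Real.exp (-2 * m * δ ^ 2) := by rw [← Real.exp_add]; congr 1; ring
  have hset : {ω | (m:ℝ) * δ ≤ (m:ℝ) * p - ∑ i, B i ω} = {ω | (m:ℝ) * δ ≤ X ω} := by
    ext ω; simp [hXeq ω]
  rw [hset]
  rw [← ENNReal.ofReal_toReal (measure_ne_top P _)]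
  exact ENNReal.ofReal_le_ofReal hfinal


lemma quant_mem (μ : Measure ℝ) [IsProbabilityMeasure μ] (ρ : ℝ) (h0 : 0 < ρ) (h1 : ρ < 1) :
    BddBelow {y : ℝ | ρ ≤ (μ (Iic y)).toReal} ∧
    ENNReal.ofReal ρ ≤ μ (Iic (sInf {y : ℝ | ρ ≤ (μ (Iic y)).toReal})) ∧
    μ (Iio (sInf {y : ℝ | ρ ≤ (μ (Iic y)).toReal})) ≤ ENNReal.ofReal ρ := by
  set A := {y : ℝ | ρ ≤ (μ (Iic y)).toReal} with hA
  have hiff : ∀ y : ℝ, y ∈ A ↔ ENNReal.ofReal ρ ≤ μ (Iic y) := by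
    intro y
    rw [hA, mem_setOf_eq, ENNReal.ofReal_le_iff_le_toReal (measure_ne_top μ _)]
  have hne : A.Nonempty := by
    have hU : (⋃ n : ℕ, Iic (n:ℝ)) = univ := by
      ext z; simp only [mem_iUnion, mem_Iic, mem_univ, iff_true]
      obtain ⟨n, hn⟩ := exists_nat_ge z; exact ⟨n, hn⟩
    have hmono : Monotone fun n : ℕ => Iic (n:ℝ) := fun a b hab =>
      Iic_subset_Iic.mpr (by exact_mod_cast hab)
    have hsup : μ (⋃ n : ℕ, Iic (n:ℝ)) = ⨆ n : ℕ, μ (Iic (n:ℝ)) :=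
      Directed.measure_iUnion hmono.directed_le
    rw [hU, measure_univ] at hsup
    have hlt : ENNReal.ofReal ρ < ⨆ n : ℕ, μ (Iic (n:ℝ)) := by
      rw [← hsup]; exact lt_of_lt_of_le (by simpa using ENNReal.ofReal_lt_one.mpr h1) le_rfl
    obtain ⟨n, hn⟩ := lt_iSup_iff.mp hlt
    exact ⟨n, (hiff n).mpr hn.le⟩
  have hbdd : BddBelow A := by
    have hI : (⋂ n : ℕ, Iic (-(n:ℝ))) = ∅ := by
      ext z; simp only [mem_iInter, mem_Iic, mem_empty_iff_false, iff_false, not_forall]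
      obtain ⟨n, hn⟩ := exists_nat_gt (-z)
      exact ⟨n, by push_neg; linarith⟩
    have hanti : Antitone fun n : ℕ => Iic (-(n:ℝ)) := fun a b hab =>
      Iic_subset_Iic.mpr (by simp; exact_mod_cast hab)
    have hinf : μ (⋂ n : ℕ, Iic (-(n:ℝ))) = ⨅ n : ℕ, μ (Iic (-(n:ℝ))) :=
      Directed.measure_iInter (fun n => measurableSet_Iic.nullMeasurableSet)
        hanti.directed_ge ⟨0, measure_ne_top μ _⟩
    rw [hI, measure_empty] at hinf
    have : (⨅ n : ℕ, μ (Iic (-(n:ℝ)))) < ENNReal.ofReal ρ := by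
      rw [← hinf]; exact ENNReal.ofReal_pos.mpr h0
    obtain ⟨n, hn⟩ := iInf_lt_iff.mp this
    refine ⟨-(n:ℝ), fun y hy => ?_⟩
    by_contra hlt
    push_neg at hlt
    exact absurd (le_trans ((hiff y).mp hy) (measure_mono (Iic_subset_Iic.mpr hlt.le)))
      (not_le.mpr hn)
  refine ⟨hbdd, ?_, ?_⟩
  · set q := sInf A with hq
    have hIic : Iic q = ⋂ n : ℕ, Iic (q + 1 / ((n:ℝ) + 1)) := by
      ext z
      simp only [mem_Iic, mem_iInter]
      constructor
      · intro h n; have : (0:ℝ) < 1 / ((n:ℝ)+1) := by positivity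
        linarith
      · intro h
        by_contra hz
        push_neg at hz
        obtain ⟨n, hn⟩ := exists_nat_one_div_lt (by linarith : (0:ℝ) < z - q)
        have := h n; linarith
    have hanti : Antitone fun n : ℕ => Iic (q + 1 / ((n:ℝ) + 1)) := by
      intro a b hab
      apply Iic_subset_Iic.mpr
      have : (1:ℝ) / ((b:ℝ)+1) ≤ 1 / ((a:ℝ)+1) := by
        apply one_div_le_one_div_of_le (by positivity)
        have : (a:ℝ) ≤ b := by exact_mod_cast hab
        linarith
      linarith
    rw [hIic, Directed.measure_iInter (fun n => measurableSet_Iic.nullMeasurableSet)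
      hanti.directed_ge ⟨0, measure_ne_top μ _⟩]
    refine le_iInf fun n => ?_
    obtain ⟨y, hyA, hylt⟩ := (csInf_lt_iff hbdd hne).mp
      (by rw [hq]; linarith [show (0:ℝ) < 1 / ((n:ℝ)+1) by positivity] :
        sInf A < q + 1 / ((n:ℝ) + 1))
    exact le_trans ((hiff y).mp hyA) (measure_mono (Iic_subset_Iic.mpr hylt.le))
  · set q := sInf A with hq
    have hIio : Iio q = ⋃ n : ℕ, Iic (q - 1 / ((n:ℝ) + 1)) := by
      ext z
      simp only [mem_Iio, mem_iUnion, mem_Iic]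
      constructor
      · intro h
        obtain ⟨n, hn⟩ := exists_nat_one_div_lt (by linarith : (0:ℝ) < q - z)
        exact ⟨n, by linarith⟩
      · rintro ⟨n, hn⟩
        have : (0:ℝ) < 1 / ((n:ℝ)+1) := by positivity
        linarith
    have hmono : Monotone fun n : ℕ => Iic (q - 1 / ((n:ℝ) + 1)) := by
      intro a b hab
      apply Iic_subset_Iic.mpr
      have : (1:ℝ) / ((b:ℝ)+1) ≤ 1 / ((a:ℝ)+1) := by
        apply one_div_le_one_div_of_le (by positivity)
        have : (a:ℝ) ≤ b := by exact_mod_cast hab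
        linarith
      linarith
    rw [hIio, Directed.measure_iUnion hmono.directed_le]
    refine iSup_le fun n => ?_
    have hnot : q - 1 / ((n:ℝ)+1) ∉ A := by
      intro hmem
      have := csInf_le hbdd hmem
      have hpos : (0:ℝ) < 1 / ((n:ℝ)+1) := by positivity
      rw [← hq] at this; linarith
    rw [hiff] at hnot
    exact (not_le.mp hnot).le

lemma dens_lb (f : ℝ → ℝ) (c : ℝ) (hc : 0 ≤ c) (S : Set ℝ) (hS : MeasurableSet S)
    (hf : ∀ y ∈ S, c ≤ f y) :
    ENNReal.ofReal c * volume S ≤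
      (volume.withDensity fun y => ENNReal.ofReal (f y)) S := by
  rw [withDensity_apply _ hS]
  calc ENNReal.ofReal c * volume S = ∫⁻ _ in S, ENNReal.ofReal c ∂volume := by
        rw [setLIntegral_const]
    _ ≤ ∫⁻ y in S, ENNReal.ofReal (f y) ∂volume := by
        refine lintegral_mono_ae ((ae_restrict_iff' hS).mpr (ae_of_all _ fun y hy => ?_))
        exact ENNReal.ofReal_le_ofReal (hf y hy)

lemma interval_mass (μ : Measure ℝ) [IsProbabilityMeasure μ] (f : ℝ → ℝ)
    (hdens : μ = MeasureTheory.volume.withDensity fun y => ENNReal.ofReal (f y))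
    (ρ₁ ρ₂ : ℝ) (h01 : 0 < ρ₁) (h12 : ρ₁ ≤ ρ₂) (h21 : ρ₂ < 1)
    (c s t : ℝ) (hc : 0 < c) (hs : 0 < s) (hst : s ≤ t)
    (hf : ∀ y : ℝ, (|y - sInf {y : ℝ | ρ₁ ≤ (μ (Iic y)).toReal}| ≤ t ∨
      |y - sInf {y : ℝ | ρ₂ ≤ (μ (Iic y)).toReal}| ≤ t) → c ≤ f y) :
    ENNReal.ofReal (ρ₂ - ρ₁ + 2 * c * s) ≤
      μ (Icc (sInf {y : ℝ | ρ₁ ≤ (μ (Iic y)).toReal} - s)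
             (sInf {y : ℝ | ρ₂ ≤ (μ (Iic y)).toReal} + s)) := by
  obtain ⟨hbdd₁, hq₁le, hq₁io⟩ := quant_mem μ ρ₁ h01 (lt_of_le_of_lt h12 h21)
  obtain ⟨hbdd₂, hq₂le, hq₂io⟩ := quant_mem μ ρ₂ (lt_of_lt_of_le h01 h12) h21
  set q₁ := sInf {y : ℝ | ρ₁ ≤ (μ (Iic y)).toReal} with hq₁
  set q₂ := sInf {y : ℝ | ρ₂ ≤ (μ (Iic y)).toReal} with hq₂
  have hq12 : q₁ ≤ q₂ := by
    apply csInf_le hbdd₁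
    rw [mem_setOf_eq, ← ENNReal.ofReal_le_iff_le_toReal (measure_ne_top μ _)]
    exact le_trans (ENNReal.ofReal_le_ofReal h12) hq₂le
  -- three pieces
  have hpiece1 : ENNReal.ofReal (c * s) ≤ μ (Ico (q₁ - s) q₁) := by
    rw [hdens]
    have := dens_lb f c hc.le (Ico (q₁ - s) q₁) measurableSet_Ico
      (fun y hy => hf y (Or.inl (by rw [abs_le]; constructor <;>
        [linarith [hy.1, hy.2]; linarith [hy.1, hy.2]]))
      )
    calc ENNReal.ofReal (c * s) = ENNReal.ofReal c * ENNReal.ofReal s := by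
          rw [ENNReal.ofReal_mul hc.le]
      _ = ENNReal.ofReal c * volume (Ico (q₁ - s) q₁) := by
          rw [Real.volume_Ico]; congr 1; ring_nf
      _ ≤ _ := this
  have hpiece3 : ENNReal.ofReal (c * s) ≤ μ (Ioc q₂ (q₂ + s)) := by
    rw [hdens]
    have := dens_lb f c hc.le (Ioc q₂ (q₂ + s)) measurableSet_Ioc
      (fun y hy => hf y (Or.inr (by rw [abs_le]; constructor <;>
        [linarith [hy.1, hy.2]; linarith [hy.1, hy.2]]))
      )
    calc ENNReal.ofReal (c * s) = ENNReal.ofReal c * ENNReal.ofReal s := by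
          rw [ENNReal.ofReal_mul hc.le]
      _ = ENNReal.ofReal c * volume (Ioc q₂ (q₂ + s)) := by
          rw [Real.volume_Ioc]; congr 1; ring_nf
      _ ≤ _ := this
  have hpiece2 : ENNReal.ofReal (ρ₂ - ρ₁) ≤ μ (Icc q₁ q₂) := by
    have hsub : Iic q₂ ⊆ Iio q₁ ∪ Icc q₁ q₂ := by
      intro z hz
      rcases lt_or_ge z q₁ with h | h
      · exact Or.inl h
      · exact Or.inr ⟨h, hz⟩
    have h1 : ENNReal.ofReal ρ₂ ≤ ENNReal.ofReal ρ₁ + μ (Icc q₁ q₂) :=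
      le_trans hq₂le (le_trans (measure_mono hsub)
        (le_trans (measure_union_le _ _) (add_le_add_left hq₁io _)))
    have h2 : ENNReal.ofReal (ρ₂ - ρ₁) + ENNReal.ofReal ρ₁ = ENNReal.ofReal ρ₂ := by
      rw [← ENNReal.ofReal_add (by linarith) h01.le]; congr 1; ring
    rw [← h2, add_comm] at h1
    exact (ENNReal.add_le_add_iff_left ENNReal.ofReal_ne_top).mp h1
  -- assemble
  have hdisj13 : Disjoint (Ico (q₁ - s) q₁) (Icc q₁ q₂ ∪ Ioc q₂ (q₂ + s)) := by
    rw [Set.disjoint_left]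
    rintro z ⟨_, hz2⟩ (⟨hz3, _⟩ | ⟨hz3, _⟩) <;> linarith
  have hdisj23 : Disjoint (Icc q₁ q₂) (Ioc q₂ (q₂ + s)) := by
    rw [Set.disjoint_left]
    rintro z ⟨_, hz2⟩ ⟨hz3, _⟩; linarith
  have hsub : Ico (q₁ - s) q₁ ∪ (Icc q₁ q₂ ∪ Ioc q₂ (q₂ + s)) ⊆ Icc (q₁ - s) (q₂ + s) := by
    rintro z (⟨h1, h2⟩ | ⟨h1, h2⟩ | ⟨h1, h2⟩) <;> exact ⟨by linarith, by linarith⟩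
  calc ENNReal.ofReal (ρ₂ - ρ₁ + 2 * c * s)
      = ENNReal.ofReal (c * s) + (ENNReal.ofReal (ρ₂ - ρ₁) + ENNReal.ofReal (c * s)) := by
        rw [← ENNReal.ofReal_add (by linarith : (0:ℝ) ≤ ρ₂ - ρ₁) (mul_nonneg hc.le hs.le),
          ← ENNReal.ofReal_add (mul_nonneg hc.le hs.le)
            (add_nonneg (by linarith) (mul_nonneg hc.le hs.le))]
        congr 1; ring
    _ ≤ μ (Ico (q₁ - s) q₁) + (μ (Icc q₁ q₂) + μ (Ioc q₂ (q₂ + s))) :=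
        add_le_add hpiece1 (add_le_add hpiece2 hpiece3)
    _ = μ (Ico (q₁ - s) q₁ ∪ (Icc q₁ q₂ ∪ Ioc q₂ (q₂ + s))) := by
        rw [measure_union hdisj13 ((measurableSet_Icc).union measurableSet_Ioc),
          measure_union hdisj23 measurableSet_Ioc]
    _ ≤ μ (Icc (q₁ - s) (q₂ + s)) := measure_mono hsub

end Helpers


/-- The `k`-th smallest value among `v 0, …, v (m-1)` (for `1 ≤ k ≤ m`), characterized
as the infimum of the thresholds below which at least `k` of the values lie. -/
def kthSmallest (m : ℕ) (v : Fin m → ℝ) (k : ℕ) : ℝ :=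
  sInf {t : ℝ | k ≤ (Finset.univ.filter fun i => v i ≤ t).card}

variable {𝒳 : Type*} [MeasurableSpace 𝒳]

/-- Conditional `τ`-th quantile of `Y` given `X = x`, for the conditional law `κ x`. -/
def cq (κ : Kernel 𝒳 ℝ) (τ : ℝ) (x : 𝒳) : ℝ :=
  sInf {y : ℝ | τ ≤ ((κ x) (Iic y)).toReal}

/-- Conditional core length `L_τ(x) = q_{1-α+τ}(x) - q_τ(x)`. -/
def cL (κ : Kernel 𝒳 ℝ) (α τ : ℝ) (x : 𝒳) : ℝ :=
  cq κ (1 - α + τ) x - cq κ τ x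

/-- Truncated conditional oracle length `L*_ε(x) = min_{τ ∈ [ε,α-ε]} L_τ(x)`. -/
def cLstar (κ : Kernel 𝒳 ℝ) (α ε : ℝ) (x : 𝒳) : ℝ :=
  sInf ((fun τ => cL κ α τ x) '' Icc ε (α - ε))

/-- Estimated allocation: the least minimizer over the grid `G` of the fitted core
length `q̂_{1-α+τ}(x) - q̂_τ(x)`. -/
def tauhat (α : ℝ) (G : Finset ℝ) (qhat : ℝ → 𝒳 → ℝ) (x : 𝒳) : ℝ :=
  sInf {τ : ℝ | τ ∈ G ∧ ∀ σ ∈ G,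
    qhat (1 - α + τ) x - qhat τ x ≤ qhat (1 - α + σ) x - qhat σ x}


lemma tauhat_spec (α : ℝ) (G : Finset ℝ) (hGne : G.Nonempty) (qhat : ℝ → 𝒳 → ℝ) (x : 𝒳) :
    (tauhat α G qhat x ∈ G ∧ ∀ σ ∈ G,
      qhat (1 - α + tauhat α G qhat x) x - qhat (tauhat α G qhat x) x ≤
        qhat (1 - α + σ) x - qhat σ x) ∧
    ∀ τ ∈ G, (∀ σ ∈ G, qhat (1 - α + τ) x - qhat τ x ≤ qhat (1 - α + σ) x - qhat σ x) →
      tauhat α G qhat x ≤ τ := by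
  classical
  set A := {τ : ℝ | τ ∈ G ∧ ∀ σ ∈ G,
    qhat (1 - α + τ) x - qhat τ x ≤ qhat (1 - α + σ) x - qhat σ x} with hA
  have hfin : A.Finite := G.finite_toSet.subset (fun τ hτ => hτ.1)
  have hne : A.Nonempty := by
    obtain ⟨b, hb, hmin⟩ := G.exists_min_image
      (fun g => qhat (1 - α + g) x - qhat g x) hGne
    exact ⟨b, hb, hmin⟩
  have hmem : sInf A ∈ A := hne.csInf_mem hfin
  exact ⟨hmem, fun τ hτG hτ => csInf_le hfin.bddBelow ⟨hτG, hτ⟩⟩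

lemma measurable_of_finrange (f : 𝒳 → ℝ) (S : Finset ℝ) (hf : ∀ x, f x ∈ S)
    (h : ∀ s ∈ S, MeasurableSet {x | f x = s}) : Measurable f := by
  intro B hB
  have : f ⁻¹' B = ⋃ s ∈ ((S : Set ℝ) ∩ B), {x | f x = s} := by
    ext x
    simp only [mem_preimage, mem_iUnion, mem_inter_iff, mem_setOf_eq, exists_prop]
    constructor
    · intro hx; exact ⟨f x, ⟨hf x, hx⟩, rfl⟩
    · rintro ⟨s, ⟨_, hsB⟩, hfx⟩; rw [hfx]; exact hsB
  rw [this]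
  exact MeasurableSet.biUnion ((S.countable_toSet).mono inter_subset_left)
    (fun s hs => h s (by exact_mod_cast hs.1))

lemma tauhat_level (α : ℝ) (G : Finset ℝ) (hGne : G.Nonempty) (qhat : ℝ → 𝒳 → ℝ)
    (g : ℝ) (hg : g ∈ G) :
    {x | tauhat α G qhat x = g} =
      {x | (∀ σ ∈ G, qhat (1 - α + g) x - qhat g x ≤ qhat (1 - α + σ) x - qhat σ x) ∧
        ∀ g' ∈ G, g' < g →
          ¬(∀ σ ∈ G, qhat (1 - α + g') x - qhat g' x ≤ qhat (1 - α + σ) x - qhat σ x)} := by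
  ext x
  obtain ⟨⟨hTG, hTmin⟩, hTle⟩ := tauhat_spec α G hGne qhat x
  simp only [mem_setOf_eq]
  constructor
  · intro hTx
    constructor
    · intro σ hσ; rw [← hTx]; exact hTmin σ hσ
    · intro g' hg'G hg'lt hg'min
      have := hTle g' hg'G hg'min
      rw [hTx] at this; linarith
  · rintro ⟨hgmin, hnone⟩
    have h1 : tauhat α G qhat x ≤ g := hTle g hg hgmin
    rcases eq_or_lt_of_le h1 with h | h
    · exact h
    · exact absurd hTmin (hnone _ hTG h)

/-- TA-CQR conformity score at `(x,y)`: `max{q̂_{τ̂(x)}(x) - y, y - q̂_{1-α+τ̂(x)}(x), 0}`. -/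
def taScore (α : ℝ) (G : Finset ℝ) (qhat : ℝ → 𝒳 → ℝ) (p : 𝒳 × ℝ) : ℝ :=
  max (max (qhat (tauhat α G qhat p.1) p.1 - p.2)
           (p.2 - qhat (1 - α + tauhat α G qhat p.1) p.1)) 0

set_option maxHeartbeats 3200000 in
/-- finite-sample calibrated length oracle inequality for TA-CQR.
With probability at least `1-η` over the i.i.d. calibration sample, the expected
calibrated interval length is at most the expected truncated oracle length plus
`M̄Δ + 4e + (δ_m(η) + 2/m)/c`. -/
theorem stmt14 (α ε : ℝ) (hα : α ∈ Ioo (0:ℝ) 1) (hε : ε ∈ Ioo (0:ℝ) (α / 2))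
    (PX : Measure 𝒳) [IsProbabilityMeasure PX]
    (κ : Kernel 𝒳 ℝ) [IsMarkovKernel κ]
    (f : 𝒳 → ℝ → ℝ)
    (hdens : ∀ x, κ x = MeasureTheory.volume.withDensity fun y => ENNReal.ofReal (f x y))
    -- grid
    (G : Finset ℝ) (hGne : G.Nonempty) (hGsub : ↑G ⊆ Icc ε (α - ε))
    (Δ : ℝ) (hmesh : ∀ τ ∈ Icc ε (α - ε), ∃ g ∈ G, |τ - g| ≤ Δ)
    (Γ : Finset ℝ) (hΓ : Γ = G ∪ G.image (fun g => 1 - α + g))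
    -- fitted quantile maps
    (qhat : ℝ → 𝒳 → ℝ) (hqm : ∀ γ ∈ Γ, Measurable (qhat γ))
    (hmono : ∀ x, ∀ γ₁ ∈ Γ, ∀ γ₂ ∈ Γ, γ₁ ≤ γ₂ → qhat γ₁ x ≤ qhat γ₂ x)
    (e : ℝ) (he : ∀ x, ∀ γ ∈ Γ, |qhat γ x - cq κ γ x| ≤ e)
    -- Lipschitz core length with integrable constant
    (M : 𝒳 → ℝ) (hMint : Integrable M PX)
    (hLip : ∀ x, ∀ s ∈ Icc ε (α - ε), ∀ t ∈ Icc ε (α - ε),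
      |cL κ α s x - cL κ α t x| ≤ M x * |s - t|)
    -- local endpoint-density lower bound
    (t c : ℝ) (ht : 0 < t) (hc : 0 < c)
    (hLD : ∀ x, ∀ τ ∈ Icc ε (α - ε), ∀ y : ℝ,
      (|y - cq κ τ x| ≤ t ∨ |y - cq κ (1 - α + τ) x| ≤ t) → c ≤ f x y)
    -- integrability of the truncated oracle length
    (hLsint : Integrable (fun x => cLstar κ α ε x) PX)
    -- i.i.d. calibration sample
    {Ω : Type*} [MeasurableSpace Ω] (P : Measure Ω) [IsProbabilityMeasure P]
    (m : ℕ) (hm : 0 < m)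
    (Z : Fin m → Ω → 𝒳 × ℝ) (hZm : ∀ i, Measurable (Z i))
    (hiid : iIndepFun Z P)
    (hlaw : ∀ i, Measure.map (Z i) P = PX ⊗ₘ κ)
    -- conformal rank
    (k : ℕ) (hk : k = ⌈((m : ℝ) + 1) * (1 - α)⌉₊) (hkm : k ≤ m)
    -- confidence level and feasibility
    (η : ℝ) (hη : η ∈ Ioo (0:ℝ) 1)
    (hfeas : e + (Real.sqrt (Real.log (2 / η) / (2 * m)) + 2 / m) / (2 * c) ≤ t) :
    ENNReal.ofReal (1 - η) ≤
      P {ω |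
        (∫ x, (qhat (1 - α + tauhat α G qhat x) x - qhat (tauhat α G qhat x) x
            + 2 * kthSmallest m (fun i => taScore α G qhat (Z i ω)) k) ∂PX)
        ≤ (∫ x, cLstar κ α ε x ∂PX) + (∫ x, M x ∂PX) * Δ + 4 * e
            + (Real.sqrt (Real.log (2 / η) / (2 * m)) + 2 / m) / c} := by
  classical
  obtain ⟨hα0, hα1⟩ := hα
  obtain ⟨hε0, hε2⟩ := hε
  obtain ⟨hη0, hη1⟩ := hη
  have hεlt : ε < α - ε := by linarith
  have hm' : (0:ℝ) < m := by exact_mod_cast hm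
  set δ := Real.sqrt (Real.log (2 / η) / (2 * m)) with hδdef
  have hδ0 : 0 ≤ δ := Real.sqrt_nonneg _
  have hXne : Nonempty 𝒳 := by
    by_contra h
    have huniv : (univ : Set 𝒳) = ∅ := by
      ext x; exact absurd ⟨x⟩ h
    have h1 : (1:ℝ≥0∞) = 0 := by
      rw [← measure_univ (μ := PX), huniv, measure_empty]
    simp at h1
  obtain ⟨x₀⟩ := hXne
  have hΓmem : ∀ g ∈ G, g ∈ Γ := fun g hg => by
    rw [hΓ]; exact Finset.mem_union_left _ hg
  have hΓmem' : ∀ g ∈ G, (1 - α + g) ∈ Γ := fun g hg => by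
    rw [hΓ]; exact Finset.mem_union_right _ (Finset.mem_image_of_mem _ hg)
  have he0 : 0 ≤ e := by
    obtain ⟨g₀, hg₀⟩ := hGne
    exact le_trans (abs_nonneg _) (he x₀ g₀ (hΓmem _ hg₀))
  have hΔ0 : 0 ≤ Δ := by
    obtain ⟨g, _, hgd⟩ := hmesh ε ⟨le_rfl, hεlt.le⟩
    exact le_trans (abs_nonneg _) hgd
  have hM0 : ∀ x, 0 ≤ M x := by
    intro x
    have h := hLip x ε ⟨le_rfl, hεlt.le⟩ (α - ε) ⟨hεlt.le, le_rfl⟩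
    have habs : 0 < |ε - (α - ε)| := abs_pos.mpr (by intro hz; linarith [hz])
    nlinarith [abs_nonneg (cL κ α ε x - cL κ α (α - ε) x)]
  -- allocation facts
  have hTG : ∀ x, tauhat α G qhat x ∈ G := fun x =>
    ((tauhat_spec α G hGne qhat x).1).1
  have hTmin : ∀ x, ∀ σ ∈ G,
      qhat (1 - α + tauhat α G qhat x) x - qhat (tauhat α G qhat x) x ≤
        qhat (1 - α + σ) x - qhat σ x := fun x =>
    ((tauhat_spec α G hGne qhat x).1).2
  -- measurability of the fitted endpoints
  have hTset : ∀ g ∈ G, MeasurableSet {x | tauhat α G qhat x = g} := by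
    intro g hg
    have hSfor : ∀ g'' ∈ G, MeasurableSet
        {x | ∀ σ ∈ G, qhat (1 - α + g'') x - qhat g'' x ≤ qhat (1 - α + σ) x - qhat σ x} := by
      intro g'' hg''
      have heq : {x | ∀ σ ∈ G, qhat (1 - α + g'') x - qhat g'' x ≤
          qhat (1 - α + σ) x - qhat σ x} =
          ⋂ σ ∈ (G : Set ℝ), {x | qhat (1 - α + g'') x - qhat g'' x ≤
            qhat (1 - α + σ) x - qhat σ x} := by
        ext x; simp [Set.mem_iInter]
      rw [heq]
      refine MeasurableSet.biInter G.countable_toSet fun σ hσ => ?_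
      exact measurableSet_le
        ((hqm _ (hΓmem' g'' hg'')).sub (hqm _ (hΓmem g'' hg'')))
        ((hqm _ (hΓmem' σ hσ)).sub (hqm _ (hΓmem σ hσ)))
    rw [tauhat_level α G hGne qhat g hg]
    have heq2 : {x | (∀ σ ∈ G, qhat (1 - α + g) x - qhat g x ≤
          qhat (1 - α + σ) x - qhat σ x) ∧
        ∀ g' ∈ G, g' < g → ¬(∀ σ ∈ G, qhat (1 - α + g') x - qhat g' x ≤
          qhat (1 - α + σ) x - qhat σ x)} =
        {x | ∀ σ ∈ G, qhat (1 - α + g) x - qhat g x ≤ qhat (1 - α + σ) x - qhat σ x} ∩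
        ⋂ g' ∈ ((G : Set ℝ) ∩ Iio g),
          {x | ∀ σ ∈ G, qhat (1 - α + g') x - qhat g' x ≤ qhat (1 - α + σ) x - qhat σ x}ᶜ := by
      ext x
      simp only [mem_setOf_eq, mem_inter_iff, mem_iInter, mem_compl_iff, mem_Iio]
      constructor
      · rintro ⟨h1, h2⟩
        exact ⟨h1, fun g' hg' => h2 g' hg'.1 hg'.2⟩
      · rintro ⟨h1, h2⟩
        exact ⟨h1, fun g' hg'G hg'lt => h2 g' ⟨hg'G, hg'lt⟩⟩
    rw [heq2]
    exact (hSfor g hg).inter (MeasurableSet.biInter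
      (G.countable_toSet.mono inter_subset_left)
      (fun g' hg' => (hSfor g' (by exact_mod_cast hg'.1)).compl))
  have hFl : Measurable (fun x => qhat (tauhat α G qhat x) x) := by
    have heq : (fun x => qhat (tauhat α G qhat x) x) =
        fun x => ∑ g ∈ G, ({x' | tauhat α G qhat x' = g}).indicator (qhat g) x := by
      funext x
      rw [Finset.sum_eq_single_of_mem (tauhat α G qhat x) (hTG x)]
      · rw [Set.indicator_of_mem (by exact rfl)]
      · intro b _ hbne
        exact Set.indicator_of_notMem (fun hxmem => hbne (by exact hxmem.symm)) _
    rw [heq]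
    exact Finset.measurable_sum _ fun g hg => (hqm g (hΓmem g hg)).indicator (hTset g hg)
  have hFu : Measurable (fun x => qhat (1 - α + tauhat α G qhat x) x) := by
    have heq : (fun x => qhat (1 - α + tauhat α G qhat x) x) =
        fun x => ∑ g ∈ G, ({x' | tauhat α G qhat x' = g}).indicator (qhat (1 - α + g)) x := by
      funext x
      rw [Finset.sum_eq_single_of_mem (tauhat α G qhat x) (hTG x)]
      · rw [Set.indicator_of_mem (by exact rfl)]
      · intro b _ hbne
        exact Set.indicator_of_notMem (fun hxmem => hbne (by exact hxmem.symm)) _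
    rw [heq]
    exact Finset.measurable_sum _ fun g hg => (hqm _ (hΓmem' g hg)).indicator (hTset g hg)
  have hscoremeas : Measurable (taScore α G qhat) := by
    have heq : taScore α G qhat = fun p : 𝒳 × ℝ =>
        max (max (qhat (tauhat α G qhat p.1) p.1 - p.2)
          (p.2 - qhat (1 - α + tauhat α G qhat p.1) p.1)) 0 := rfl
    rw [heq]
    exact (((hFl.comp measurable_fst).sub measurable_snd).max
      (measurable_snd.sub (hFu.comp measurable_fst))).max measurable_const
  -- deterministic core-length bound
  have hcore : ∀ x, qhat (1 - α + tauhat α G qhat x) x - qhat (tauhat α G qhat x) x ≤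
      cLstar κ α ε x + M x * Δ + 2 * e := by
    intro x
    have himne : ((fun τ => cL κ α τ x) '' Icc ε (α - ε)).Nonempty :=
      (nonempty_Icc.mpr hεlt.le).image _
    have hlb : ∀ b ∈ (fun τ => cL κ α τ x) '' Icc ε (α - ε),
        qhat (1 - α + tauhat α G qhat x) x - qhat (tauhat α G qhat x) x
          - M x * Δ - 2 * e ≤ b := by
      rintro b ⟨σ, hσ, rfl⟩
      obtain ⟨g, hgG, hgd⟩ := hmesh σ hσ
      have h1 := hTmin x g hgG
      have h2 := abs_le.mp (he x (1 - α + g) (hΓmem' g hgG))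
      have h3 := abs_le.mp (he x g (hΓmem g hgG))
      have h4 : cL κ α g x ≤ cL κ α σ x + M x * Δ := by
        have h5 := abs_le.mp (hLip x g (hGsub hgG) σ hσ)
        have h6 : M x * |g - σ| ≤ M x * Δ :=
          mul_le_mul_of_nonneg_left (by rwa [abs_sub_comm]) (hM0 x)
        have h7 := abs_le.mp (hLip x g (hGsub hgG) σ hσ)
        linarith [h7.2, h6, le_abs_self (cL κ α g x - cL κ α σ x),
          abs_le.mp (hLip x g (hGsub hgG) σ hσ) |>.1]
      have h8 : cL κ α g x = cq κ (1 - α + g) x - cq κ g x := rfl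
      have h9 : cL κ α σ x = cq κ (1 - α + σ) x - cq κ σ x := rfl
      rw [h9] at h4
      rw [h8] at h4
      linarith [h1, h2.1, h2.2, h3.1, h3.2, h4]
    have hsinf := le_csInf himne hlb
    have : cLstar κ α ε x = sInf ((fun τ => cL κ α τ x) '' Icc ε (α - ε)) := rfl
    rw [this]
    linarith [hsinf]
  have hcore0 : ∀ x, 0 ≤ qhat (1 - α + tauhat α G qhat x) x - qhat (tauhat α G qhat x) x := by
    intro x
    have := hmono x (tauhat α G qhat x) (hΓmem _ (hTG x)) (1 - α + tauhat α G qhat x)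
      (hΓmem' _ (hTG x)) (by linarith)
    linarith
  -- integrability of the fitted length
  have hboundint : Integrable (fun x => cLstar κ α ε x + M x * Δ + 2 * e) PX :=
    (hLsint.add (hMint.mul_const Δ)).add (integrable_const _)
  have hgm : Measurable (fun x =>
      qhat (1 - α + tauhat α G qhat x) x - qhat (tauhat α G qhat x) x) := hFu.sub hFl
  have hgint : Integrable (fun x =>
      qhat (1 - α + tauhat α G qhat x) x - qhat (tauhat α G qhat x) x) PX := by
    refine hboundint.mono' hgm.aestronglyMeasurable (ae_of_all _ fun x => ?_)
    rw [Real.norm_eq_abs, abs_of_nonneg (hcore0 x)]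
    exact hcore x
  have hlen : ∫ x, (qhat (1 - α + tauhat α G qhat x) x - qhat (tauhat α G qhat x) x) ∂PX ≤
      (∫ x, cLstar κ α ε x ∂PX) + (∫ x, M x ∂PX) * Δ + 2 * e := by
    calc ∫ x, (qhat (1 - α + tauhat α G qhat x) x - qhat (tauhat α G qhat x) x) ∂PX
        ≤ ∫ x, (cLstar κ α ε x + M x * Δ + 2 * e) ∂PX :=
          integral_mono hgint hboundint (fun x => hcore x)
      _ = (∫ x, cLstar κ α ε x ∂PX) + (∫ x, M x ∂PX) * Δ + 2 * e := by
          have hi1 : Integrable (fun x => cLstar κ α ε x + M x * Δ) PX :=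
            hLsint.add (hMint.mul_const Δ)
          have hi2 : Integrable (fun x => M x * Δ) PX := hMint.mul_const Δ
          rw [show (fun x => cLstar κ α ε x + M x * Δ + 2 * e) =
              (fun x => (cLstar κ α ε x + M x * Δ) + 2 * e) from rfl,
            integral_add hi1 (integrable_const (2 * e)),
            integral_add hLsint hi2, integral_const, integral_mul_const]
          simp [measure_univ]
  -- the score sublevel set
  have h2m : (0:ℝ) < 2 / m := by positivity
  have hsε : (0:ℝ) < (δ + 2 / m) / (2 * c) := by
    apply div_pos (by linarith) (by linarith)
  have hst : (δ + 2 / m) / (2 * c) ≤ t := by linarith [hfeas, he0]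
  have hr0 : (0:ℝ) ≤ e + (δ + 2 / m) / (2 * c) := by linarith
  set r : ℝ := e + (δ + 2 / m) / (2 * c) with hrdef
  set S : Set (𝒳 × ℝ) := {q : 𝒳 × ℝ | taScore α G qhat q ≤ r} with hSdef
  have hSmeas : MeasurableSet S := by
    have : S = taScore α G qhat ⁻¹' Iic r := rfl
    rw [this]
    exact hscoremeas measurableSet_Iic
  -- per-x mass bound
  set p₀ : ℝ := 1 - α + (δ + 2 / m) with hp₀def
  have hmass : ∀ x, ENNReal.ofReal p₀ ≤ κ x (Prod.mk x ⁻¹' S) := by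
    intro x
    have hτ := hGsub (hTG x)
    set τ := tauhat α G qhat x with hτdef
    have him := interval_mass (κ x) (f x) (hdens x) τ (1 - α + τ)
      (by linarith [hτ.1]) (by linarith) (by linarith [hτ.2])
      c ((δ + 2 / m) / (2 * c)) t hc hsε hst
      (fun y hy => hLD x τ hτ y hy)
    have h2cs : (1 - α + τ) - τ + 2 * c * ((δ + 2 / m) / (2 * c)) = p₀ := by
      rw [hp₀def]; field_simp; ring
    rw [h2cs] at him
    refine le_trans him (measure_mono ?_)
    have hql := abs_le.mp (he x τ (hΓmem _ (hTG x)))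
    have hqu := abs_le.mp (he x (1 - α + τ) (hΓmem' _ (hTG x)))
    intro y hy
    have hy1 := hy.1
    have hy2 := hy.2
    show y ∈ Prod.mk x ⁻¹' S
    have hcq1 : cq κ τ x = sInf {y : ℝ | τ ≤ ((κ x) (Iic y)).toReal} := rfl
    have hcq2 : cq κ (1 - α + τ) x =
        sInf {y : ℝ | 1 - α + τ ≤ ((κ x) (Iic y)).toReal} := rfl
    rw [← hcq1] at hy1
    rw [← hcq2] at hy2
    show taScore α G qhat (x, y) ≤ r
    have hsc : taScore α G qhat (x, y) =
        max (max (qhat τ x - y) (y - qhat (1 - α + τ) x)) 0 := rfl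
    rw [hsc]
    have hb1 : qhat τ x - y ≤ r := by
      have := hql.1
      rw [hrdef]; linarith
    have hb2 : y - qhat (1 - α + τ) x ≤ r := by
      have := hqu.2
      rw [hrdef]; linarith
    exact max_le (max_le hb1 hb2) hr0
  -- mass of S under the joint law
  have hne_top : (PX ⊗ₘ κ) S ≠ ⊤ := by
    rw [← hlaw ⟨0, hm⟩, Measure.map_apply (hZm _) hSmeas]
    exact measure_ne_top _ _
  have hPprod : ENNReal.ofReal p₀ ≤ (PX ⊗ₘ κ) S := by
    rw [Measure.compProd_apply hSmeas]
    calc ENNReal.ofReal p₀ = ∫⁻ _, ENNReal.ofReal p₀ ∂PX := by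
          rw [lintegral_const]; simp [measure_univ]
      _ ≤ ∫⁻ x, κ x (Prod.mk x ⁻¹' S) ∂PX := lintegral_mono hmass
  set p : ℝ := ((PX ⊗ₘ κ) S).toReal with hpdef
  have hp₀p : p₀ ≤ p := (ENNReal.ofReal_le_iff_le_toReal hne_top).mp hPprod
  -- calibration indicators
  set U : Fin m → Set Ω := fun i => Z i ⁻¹' S with hUdef
  have hU : ∀ i, MeasurableSet (U i) := fun i => (hZm i) hSmeas
  set B : Fin m → Ω → ℝ := fun i ω => S.indicator (fun _ => (1:ℝ)) (Z i ω) with hBdef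
  have hBeq : ∀ i, B i = (U i).indicator (fun _ => (1:ℝ)) := by
    intro i; funext ω
    by_cases h : Z i ω ∈ S <;>
      simp [hBdef, hUdef, Set.indicator_apply, h, mem_preimage]
  have hBind : iIndepFun B P :=
    hiid.comp (fun _ => S.indicator fun _ => (1:ℝ))
      (fun _ => measurable_const.indicator hSmeas)
  have hpUi : ∀ i, (P (U i)).toReal = p := by
    intro i
    rw [hpdef, hUdef]
    rw [← Measure.map_apply (hZm i) hSmeas, hlaw i]
  have hconc := hoeff_conc P m hm B U hU hBeq hBind p hpUi δ hδ0
  have hexp : Real.exp (-2 * m * δ ^ 2) = η / 2 := by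
    have hlog0 : 0 ≤ Real.log (2 / η) := by
      apply Real.log_nonneg
      rw [le_div_iff₀ hη0]; linarith
    have hδsq : δ ^ 2 = Real.log (2 / η) / (2 * m) := by
      rw [hδdef, Real.sq_sqrt (div_nonneg hlog0 (by linarith))]
    rw [hδsq]
    have harith : -2 * (m:ℝ) * (Real.log (2 / η) / (2 * m)) = -Real.log (2 / η) := by
      field_simp
    rw [harith, Real.exp_neg, Real.exp_log (by positivity), inv_div]
  -- the good event
  have hBmeas : ∀ i, Measurable (B i) := by
    intro i; rw [hBeq i]; exact measurable_const.indicator (hU i)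
  set A : Set Ω := {ω | (k:ℝ) ≤ ∑ i, B i ω} with hAdef
  have hAmeas : MeasurableSet A :=
    measurableSet_le measurable_const (Finset.measurable_sum _ fun i _ => hBmeas i)
  have hcompl : Aᶜ ⊆ {ω | (m:ℝ) * δ ≤ (m:ℝ) * p - ∑ i, B i ω} := by
    intro ω hω
    simp only [hAdef, mem_compl_iff, mem_setOf_eq, not_le] at hω
    have hkub : (k:ℝ) ≤ ((m:ℝ) + 1) * (1 - α) + 1 := by
      rw [hk]
      have := Nat.ceil_lt_add_one
        (mul_nonneg (by positivity) (by linarith) : (0:ℝ) ≤ ((m:ℝ) + 1) * (1 - α))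
      exact this.le
    have hmp₀ : (m:ℝ) * p₀ = m * (1 - α) + m * δ + 2 := by
      rw [hp₀def]; field_simp; ring
    have hmp : (m:ℝ) * p₀ ≤ m * p := mul_le_mul_of_nonneg_left hp₀p (by positivity)
    show (m:ℝ) * δ ≤ (m:ℝ) * p - ∑ i, B i ω
    nlinarith [hω, hkub, hmp₀, hmp, hα0]
  have hPAc : P Aᶜ ≤ ENNReal.ofReal (η / 2) := by
    refine le_trans (measure_mono hcompl) ?_
    rw [← hexp]
    exact hconc
  have hPA : ENNReal.ofReal (1 - η) ≤ P A := by
    have hsum : P A + P Aᶜ = 1 := by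
      have := measure_add_measure_compl (μ := P) hAmeas
      rwa [measure_univ] at this
    have h1 : (1:ℝ≥0∞) ≤ P A + ENNReal.ofReal (η / 2) := by
      rw [← hsum]; exact add_le_add le_rfl hPAc
    have h2 : ENNReal.ofReal (1 - η) + ENNReal.ofReal (η / 2) ≤ (1:ℝ≥0∞) := by
      rw [← ENNReal.ofReal_add (by linarith) (by linarith)]
      calc ENNReal.ofReal (1 - η + η / 2) ≤ ENNReal.ofReal 1 :=
            ENNReal.ofReal_le_ofReal (by linarith)
        _ = 1 := by simp
    calc ENNReal.ofReal (1 - η) ≤ 1 - ENNReal.ofReal (η / 2) :=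
          ENNReal.le_sub_of_add_le_right ENNReal.ofReal_ne_top h2
      _ ≤ P A := tsub_le_iff_right.mpr h1
  -- on the good event, the kth smallest score is at most r
  have hk1 : 1 ≤ k := by
    rw [hk]
    exact Nat.one_le_iff_ne_zero.mpr (Nat.pos_iff_ne_zero.mp (Nat.ceil_pos.mpr
      (mul_pos (by positivity) (by linarith))))
  have hQle : ∀ ω ∈ A, kthSmallest m (fun i => taScore α G qhat (Z i ω)) k ≤ r := by
    intro ω hω
    have hsum : ∑ i, B i ω =
        ((Finset.univ.filter fun i => taScore α G qhat (Z i ω) ≤ r).card : ℝ) := by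
      rw [Finset.card_filter]
      push_cast
      refine Finset.sum_congr rfl fun i _ => ?_
      by_cases h : taScore α G qhat (Z i ω) ≤ r <;>
        simp [hBdef, Set.indicator_apply, hSdef, mem_setOf_eq, h]
    have hcard : k ≤ (Finset.univ.filter fun i => taScore α G qhat (Z i ω) ≤ r).card := by
      have h1 : (k:ℝ) ≤ ∑ i, B i ω := hω
      rw [hsum] at h1
      exact_mod_cast h1
    have hFinne : (Finset.univ : Finset (Fin m)).Nonempty := ⟨⟨0, hm⟩, Finset.mem_univ _⟩
    have hbdd : BddBelow {u : ℝ |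
        k ≤ (Finset.univ.filter fun i => taScore α G qhat (Z i ω) ≤ u).card} := by
      refine ⟨Finset.univ.inf' hFinne (fun i => taScore α G qhat (Z i ω)), fun u hu => ?_⟩
      have hpos : 0 < (Finset.univ.filter fun i => taScore α G qhat (Z i ω) ≤ u).card :=
        lt_of_lt_of_le hk1 hu
      obtain ⟨i, hi⟩ := Finset.card_pos.mp hpos
      have := (Finset.mem_filter.mp hi).2
      exact le_trans (Finset.inf'_le _ (Finset.mem_univ i)) this
    exact csInf_le hbdd hcard
  -- conclude
  refine le_trans hPA (measure_mono ?_)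
  intro ω hω
  have hQ := hQle ω hω
  set Q := kthSmallest m (fun i => taScore α G qhat (Z i ω)) k with hQdef
  show (∫ x, (qhat (1 - α + tauhat α G qhat x) x - qhat (tauhat α G qhat x) x
      + 2 * Q) ∂PX)
      ≤ (∫ x, cLstar κ α ε x ∂PX) + (∫ x, M x ∂PX) * Δ + 4 * e + (δ + 2 / m) / c
  have hsplit : (∫ x, (qhat (1 - α + tauhat α G qhat x) x - qhat (tauhat α G qhat x) x
      + 2 * Q) ∂PX) =
      (∫ x, (qhat (1 - α + tauhat α G qhat x) x - qhat (tauhat α G qhat x) x) ∂PX)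
        + 2 * Q := by
    rw [integral_add hgint (integrable_const _), integral_const]
    simp [measure_univ]
  rw [hsplit]
  have h2r : 2 * r = 2 * e + (δ + 2 / m) / c := by
    rw [hrdef]; field_simp
  refine le_trans (add_le_add hlen
    (mul_le_mul_of_nonneg_left hQ (by norm_num : (0:ℝ) ≤ 2))) ?_
  linarith [h2r]


end
end

section
/- Consider a sequence of TA-CQR problems indexed by n in which the calibration size m = m_n → ∞, the grid G_m ⊂ [ε, α−ε] contains α/2, the observations are i.i.d., the local endpoint-density lower bound holds with constants t, c > 0, and the (random, training-dependent) finite-grid endpoint error e_n := sup_{x, γ∈Γ_m} |q̂_γ(x) − q_γ(x)| converges to 0 in probability. Let Q^{TA} and Q^{std} be the split-conformal calibration radii (k-th order statistic of the respective nonnegative scores with k = ⌈(m+1)(1−α)⌉) for the tail-allocation scores and the equal-tailed scores. Then Q^{TA} = O_p(e_n + m^{−1/2}) and Q^{std} = O_p(e_n + m^{−1/2}); consequently |Q^{TA} − Q^{std}| = O_p(e_n + m^{−1/2}) = o_p(1). -/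
open MeasureTheory Set Filter ProbabilityTheory
open scoped ENNReal

noncomputable section

variable {𝒳 : Type*} [MeasurableSpace 𝒳]

-- ### measurability helpers

lemma meas_piecewise {δ : Type*} [MeasurableSpace δ] (S : Finset ℝ) (T : δ → ℝ)
    (hmem : ∀ a, T a ∈ S) (hT : Measurable T) (F : ℝ → δ → ℝ)
    (hF : ∀ b ∈ S, Measurable (F b)) : Measurable fun a => F (T a) a := by
  intro B hB
  have : (fun a => F (T a) a) ⁻¹' B = ⋃ b ∈ S, ({a | T a = b} ∩ F b ⁻¹' B) := by
    ext a
    simp only [mem_preimage, mem_iUnion, mem_inter_iff, mem_setOf_eq]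
    constructor
    · intro h; exact ⟨T a, hmem a, rfl, h⟩
    · rintro ⟨b, _, rfl, h⟩; exact h
  rw [this]
  exact MeasurableSet.biUnion S.countable_toSet fun b hb =>
    ((hT (measurableSet_singleton b)).inter (hF b hb hB))

lemma meas_of_finite_range {δ : Type*} [MeasurableSpace δ] (S : Finset ℝ) (T : δ → ℝ)
    (hmem : ∀ a, T a ∈ S) (hfib : ∀ b, MeasurableSet {a | T a = b}) : Measurable T := by
  classical
  intro B hB
  have : T ⁻¹' B = ⋃ b ∈ S, ({a | T a = b} ∩ (if b ∈ B then univ else ∅)) := by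
    ext a
    simp only [mem_preimage, mem_iUnion, mem_inter_iff, mem_setOf_eq]
    constructor
    · intro h
      refine ⟨T a, hmem a, rfl, ?_⟩
      simp [h]
    · rintro ⟨b, _, rfl, h⟩
      by_cases hb : T a ∈ B
      · exact hb
      · simp [hb] at h
  rw [this]
  refine MeasurableSet.biUnion S.countable_toSet fun b _ => (hfib b).inter ?_
  split <;> simp

-- ### cq facts

section cqfacts

variable (κ : Kernel 𝒳 ℝ) [IsMarkovKernel κ]

lemma F_le_one (x : 𝒳) (y : ℝ) : ((κ x) (Iic y)).toReal ≤ 1 := by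
  have h := measure_mono (subset_univ (Iic y)) (μ := κ x)
  rw [measure_univ] at h
  simpa using ENNReal.toReal_mono (by simp) h

lemma F_mono (x : 𝒳) {y z : ℝ} (h : y ≤ z) :
    ((κ x) (Iic y)).toReal ≤ ((κ x) (Iic z)).toReal :=
  ENNReal.toReal_mono (measure_ne_top _ _) (measure_mono (Iic_subset_Iic.2 h))

lemma cqS_nonempty (x : 𝒳) {γ : ℝ} (h1 : γ < 1) :
    {y : ℝ | γ ≤ ((κ x) (Iic y)).toReal}.Nonempty := by
  rw [Set.nonempty_iff_ne_empty]
  intro h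
  have hlt : ∀ y : ℝ, ((κ x) (Iic y)).toReal < γ := by
    intro y
    by_contra hy
    push_neg at hy
    have hmem : y ∈ {y : ℝ | γ ≤ ((κ x) (Iic y)).toReal} := hy
    rw [h] at hmem
    exact hmem
  have hU : (⋃ n : ℕ, Iic (n : ℝ)) = univ := by
    ext y; simp only [mem_iUnion, mem_Iic, mem_univ, iff_true]
    exact exists_nat_ge y
  have htend : Tendsto (fun n : ℕ => (κ x) (Iic (n : ℝ))) atTop (nhds ((κ x) univ)) := by
    have := tendsto_measure_iUnion_atTop (μ := κ x) (s := fun n : ℕ => Iic (n : ℝ))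
      (fun a b hab => Iic_subset_Iic.2 (by exact_mod_cast hab))
    rwa [hU] at this
  rw [measure_univ] at htend
  have hle : ∀ n : ℕ, (κ x) (Iic (n : ℝ)) ≤ ENNReal.ofReal γ := by
    intro n
    have := (hlt n).le
    rw [← ENNReal.ofReal_toReal (measure_ne_top (κ x) _)]
    exact ENNReal.ofReal_le_ofReal this
  have : (1 : ℝ≥0∞) ≤ ENNReal.ofReal γ := le_of_tendsto htend (Eventually.of_forall hle)
  exact absurd this (not_le.2 (ENNReal.ofReal_lt_one.2 h1))

lemma cqS_bddBelow (x : 𝒳) {γ : ℝ} (h0 : 0 < γ) :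
    BddBelow {y : ℝ | γ ≤ ((κ x) (Iic y)).toReal} := by
  have hI : (⋂ n : ℕ, Iic (-(n : ℝ))) = ∅ := by
    ext y; simp only [mem_iInter, mem_Iic, mem_empty_iff_false, iff_false, not_forall, not_le]
    obtain ⟨n, hn⟩ := exists_nat_gt (-y)
    exact ⟨n, by linarith⟩
  have htend : Tendsto (fun n : ℕ => (κ x) (Iic (-(n : ℝ)))) atTop (nhds 0) := by
    have := tendsto_measure_iInter_atTop (μ := κ x)
      (fun n : ℕ => (measurableSet_Iic (a := -(n:ℝ))).nullMeasurableSet)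
      (fun a b hab => Iic_subset_Iic.2 (by exact_mod_cast neg_le_neg (show (a:ℝ) ≤ b by exact_mod_cast hab)))
      ⟨0, measure_ne_top _ _⟩
    rwa [hI, measure_empty] at this
  have hev : ∀ᶠ n : ℕ in atTop, (κ x) (Iic (-(n : ℝ))) < ENNReal.ofReal γ :=
    htend.eventually_lt_const (by simp [h0])
  obtain ⟨n, hn⟩ := hev.exists
  refine ⟨-(n : ℝ), fun y hy => ?_⟩
  by_contra hlt
  push_neg at hlt
  have h1 : (κ x) (Iic y) ≤ (κ x) (Iic (-(n:ℝ))) := measure_mono (Iic_subset_Iic.2 hlt.le)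
  have h2 : ((κ x) (Iic y)).toReal < γ := by
    calc ((κ x) (Iic y)).toReal ≤ ((κ x) (Iic (-(n:ℝ)))).toReal :=
          ENNReal.toReal_mono (measure_ne_top _ _) h1
    _ < γ := by
        have := ENNReal.toReal_lt_toReal (measure_ne_top _ _) (by simp) |>.mpr hn
        simpa [ENNReal.toReal_ofReal h0.le] using this
  exact absurd hy (not_le.2 h2)

lemma measurable_cq {γ : ℝ} (h0 : 0 < γ) (h1 : γ < 1) : Measurable (cq κ γ) := by
  apply measurable_of_Iio
  intro b
  have : cq κ γ ⁻¹' Iio b =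
      ⋃ (q : ℚ), ⋃ (_ : (q : ℝ) < b), {x | γ ≤ ((κ x) (Iic (q : ℝ))).toReal} := by
    ext x
    simp only [mem_preimage, mem_Iio, mem_iUnion, mem_setOf_eq]
    constructor
    · intro h
      obtain ⟨y, hy, hyb⟩ := exists_lt_of_csInf_lt (cqS_nonempty κ x h1) h
      obtain ⟨q, hq1, hq2⟩ := exists_rat_btwn hyb
      exact ⟨q, hq2, le_trans hy (F_mono κ x hq1.le)⟩
    · rintro ⟨q, hqb, hq⟩
      exact lt_of_le_of_lt (csInf_le (cqS_bddBelow κ x h0) hq) hqb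
  rw [this]
  refine MeasurableSet.iUnion fun q => MeasurableSet.iUnion fun _ => ?_
  exact measurableSet_le measurable_const ((κ.measurable_coe measurableSet_Iic).ennreal_toReal)

end cqfacts

section density

variable (κ : Kernel 𝒳 ℝ) [IsMarkovKernel κ] (f : 𝒳 → ℝ → ℝ)

lemma dens_Ioc (x : 𝒳) (hdens : κ x = MeasureTheory.volume.withDensity fun y => ENNReal.ofReal (f x y))
    {a b c : ℝ} (hab : a ≤ b) (hc : 0 ≤ c) (hf : ∀ y ∈ Ioc a b, c ≤ f x y) :
    ENNReal.ofReal (c * (b - a)) ≤ (κ x) (Ioc a b) := by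
  rw [hdens, withDensity_apply _ measurableSet_Ioc]
  have h1 : ∫⁻ y in Ioc a b, (Ioc a b).indicator (fun _ => ENNReal.ofReal c) y ∂volume
      ≤ ∫⁻ y in Ioc a b, ENNReal.ofReal (f x y) ∂volume := by
    apply lintegral_mono
    intro y
    by_cases hy : y ∈ Ioc a b
    · simp only [indicator_of_mem hy]
      exact ENNReal.ofReal_le_ofReal (hf y hy)
    · simp [indicator_of_notMem hy]
  refine le_trans ?_ h1
  rw [lintegral_indicator measurableSet_Ioc, Measure.restrict_restrict measurableSet_Ioc,
    Set.inter_self, setLIntegral_const]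
  rw [Real.volume_Ioc, ← ENNReal.ofReal_mul hc]

variable {c t : ℝ}

lemma F_ge_add (x : 𝒳)
    (hdens : κ x = MeasureTheory.volume.withDensity fun y => ENNReal.ofReal (f x y))
    {β Δ : ℝ} (hβ1 : β < 1) (hc : 0 < c) (hΔ : 0 < Δ) (hΔt : Δ ≤ t)
    (hf : ∀ y : ℝ, |y - cq κ β x| ≤ t → c ≤ f x y) :
    β + c * Δ / 2 ≤ ((κ x) (Iic (cq κ β x + Δ))).toReal := by
  set q := cq κ β x with hq
  have h1 : β ≤ ((κ x) (Iic (q + Δ / 2))).toReal := by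
    obtain ⟨y, hy, hyb⟩ := exists_lt_of_csInf_lt (cqS_nonempty κ x hβ1)
      (show q < q + Δ / 2 by linarith)
    exact le_trans hy (F_mono κ x hyb.le)
  have h2 : ENNReal.ofReal (c * (Δ / 2)) ≤ (κ x) (Ioc (q + Δ / 2) (q + Δ)) := by
    rw [show c * (Δ / 2) = c * ((q + Δ) - (q + Δ / 2)) by ring]
    apply dens_Ioc κ f x hdens (by linarith) hc.le
    intro y hy
    apply hf
    rw [abs_le]
    constructor <;> [skip; skip] <;> rcases hy with ⟨hy1, hy2⟩ <;> nlinarith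
  have hsplit : (κ x) (Iic (q + Δ)) = (κ x) (Iic (q + Δ / 2)) + (κ x) (Ioc (q + Δ / 2) (q + Δ)) := by
    rw [← Iic_union_Ioc_eq_Iic (by linarith : q + Δ / 2 ≤ q + Δ)]
    exact measure_union (Iic_disjoint_Ioc le_rfl) measurableSet_Ioc
  have h3 : c * (Δ / 2) ≤ ((κ x) (Ioc (q + Δ / 2) (q + Δ))).toReal := by
    have := ENNReal.toReal_mono (measure_ne_top _ _) h2
    rwa [ENNReal.toReal_ofReal (by positivity)] at this
  have h4 : ((κ x) (Iic (q + Δ))).toReal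
      = ((κ x) (Iic (q + Δ / 2))).toReal + ((κ x) (Ioc (q + Δ / 2) (q + Δ))).toReal := by
    rw [hsplit, ENNReal.toReal_add (measure_ne_top _ _) (measure_ne_top _ _)]
  rw [h4]; linarith

lemma F_sub_le (x : 𝒳)
    (hdens : κ x = MeasureTheory.volume.withDensity fun y => ENNReal.ofReal (f x y))
    {β Δ : ℝ} (hβ0 : 0 < β) (hc : 0 < c) (hΔ : 0 < Δ) (hΔt : Δ ≤ t)
    (hf : ∀ y : ℝ, |y - cq κ β x| ≤ t → c ≤ f x y) :
    ((κ x) (Iic (cq κ β x - Δ))).toReal ≤ β - c * Δ / 2 := by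
  set q := cq κ β x with hq
  have h1 : ((κ x) (Iic (q - Δ / 2))).toReal ≤ β := by
    by_contra h
    push_neg at h
    have hmem : q - Δ / 2 ∈ {y : ℝ | β ≤ ((κ x) (Iic y)).toReal} := h.le
    have := csInf_le (cqS_bddBelow κ x hβ0) hmem
    rw [show sInf {y : ℝ | β ≤ ((κ x) (Iic y)).toReal} = q from rfl] at this
    linarith
  have h2 : ENNReal.ofReal (c * (Δ / 2)) ≤ (κ x) (Ioc (q - Δ) (q - Δ / 2)) := by
    rw [show c * (Δ / 2) = c * ((q - Δ / 2) - (q - Δ)) by ring]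
    apply dens_Ioc κ f x hdens (by linarith) hc.le
    intro y hy
    apply hf
    rw [abs_le]
    constructor <;> [skip; skip] <;> rcases hy with ⟨hy1, hy2⟩ <;> nlinarith
  have h3 : c * (Δ / 2) ≤ ((κ x) (Ioc (q - Δ) (q - Δ / 2))).toReal := by
    have := ENNReal.toReal_mono (measure_ne_top _ _) h2
    rwa [ENNReal.toReal_ofReal (by positivity)] at this
  have hsplit : (κ x) (Iic (q - Δ / 2)) = (κ x) (Iic (q - Δ)) + (κ x) (Ioc (q - Δ) (q - Δ / 2)) := by
    rw [← Iic_union_Ioc_eq_Iic (by linarith : q - Δ ≤ q - Δ / 2)]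
    exact measure_union (Iic_disjoint_Ioc le_rfl) measurableSet_Ioc
  have h4 : ((κ x) (Iic (q - Δ / 2))).toReal
      = ((κ x) (Iic (q - Δ))).toReal + ((κ x) (Ioc (q - Δ) (q - Δ / 2))).toReal := by
    rw [hsplit, ENNReal.toReal_add (measure_ne_top _ _) (measure_ne_top _ _)]
  rw [h4] at h1; linarith

end density

-- ### kthSmallest facts

lemma kthSmallest_nonneg {m k : ℕ} (hk : 1 ≤ k) {v : Fin m → ℝ} (hv : ∀ i, 0 ≤ v i) :
    0 ≤ kthSmallest m v k := by
  apply Real.sInf_nonneg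
  intro u hu
  have : 0 < (Finset.univ.filter fun i => v i ≤ u).card := lt_of_lt_of_le hk hu
  obtain ⟨i, hi⟩ := Finset.card_pos.1 this
  rw [Finset.mem_filter] at hi
  exact le_trans (hv i) hi.2

lemma kthSmallest_le {m k : ℕ} (hk : 1 ≤ k) {v : Fin m → ℝ} (hv : ∀ i, 0 ≤ v i) {u : ℝ}
    (hcount : k ≤ (Finset.univ.filter fun i => v i ≤ u).card) : kthSmallest m v k ≤ u := by
  unfold kthSmallest
  refine csInf_le ?_ (show u ∈ {t : ℝ | k ≤ (Finset.univ.filter fun i => v i ≤ t).card} from hcount)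
  refine ⟨0, fun w hw => ?_⟩
  have : 0 < (Finset.univ.filter fun i => v i ≤ w).card := lt_of_lt_of_le hk hw
  obtain ⟨i, hi⟩ := Finset.card_pos.1 this
  rw [Finset.mem_filter] at hi
  exact le_trans (hv i) hi.2

-- ### tauhat facts

section tauhatfacts

variable {δ : Type*} [MeasurableSpace δ] (G : Finset ℝ) (H : δ → ℝ → ℝ)

def Aset (p : δ) : Set ℝ := {τ | τ ∈ G ∧ ∀ σ ∈ G, H p τ ≤ H p σ}

lemma Aset_nonempty (hG : G.Nonempty) (p : δ) : (Aset G H p).Nonempty := by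
  obtain ⟨τ0, hτ0, hmin⟩ := G.exists_min_image (H p) hG
  exact ⟨τ0, hτ0, hmin⟩

lemma Aset_finite (p : δ) : (Aset G H p).Finite :=
  G.finite_toSet.subset fun τ hτ => hτ.1

lemma sInf_Aset_mem (hG : G.Nonempty) (p : δ) : sInf (Aset G H p) ∈ Aset G H p :=
  (Aset_nonempty G H hG p).csInf_mem (Aset_finite G H p)

lemma sInf_Aset_eq_iff (hG : G.Nonempty) (p : δ) (b : ℝ) :
    sInf (Aset G H p) = b ↔ b ∈ Aset G H p ∧ ∀ τ ∈ Aset G H p, b ≤ τ := by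
  constructor
  · intro h
    refine ⟨h ▸ sInf_Aset_mem G H hG p, fun τ hτ => ?_⟩
    exact h ▸ csInf_le (Aset_finite G H p).bddBelow hτ
  · rintro ⟨hb, hlb⟩
    exact le_antisymm (csInf_le (Aset_finite G H p).bddBelow hb)
      (le_csInf (Aset_nonempty G H hG p) hlb)

lemma measurable_sInf_Aset (hG : G.Nonempty)
    (hH : ∀ τ ∈ G, Measurable fun p => H p τ) :
    Measurable fun p => sInf (Aset G H p) := by
  apply meas_of_finite_range G _ (fun p => (sInf_Aset_mem G H hG p).1)
  intro b
  by_cases hbG : b ∈ G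
  · have : {p | sInf (Aset G H p) = b} =
        (⋂ σ ∈ (G : Set ℝ), {p | H p b ≤ H p σ}) ∩
        ⋂ τ ∈ (G : Set ℝ), ({p | ∀ σ ∈ G, H p τ ≤ H p σ}ᶜ ∪ {p | b ≤ τ}) := by
      ext p
      rw [mem_setOf_eq, sInf_Aset_eq_iff G H hG p b]
      simp only [mem_inter_iff, mem_iInter, mem_union, mem_compl_iff, mem_setOf_eq,
        Finset.mem_coe, Aset]
      constructor
      · rintro ⟨⟨_, hmin⟩, hlb⟩
        refine ⟨fun σ hσ => hmin σ hσ, fun τ hτ => ?_⟩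
        by_cases hmτ : ∀ σ ∈ G, H p τ ≤ H p σ
        · exact Or.inr (hlb τ ⟨hτ, hmτ⟩)
        · exact Or.inl hmτ
      · rintro ⟨hmin, hlb⟩
        refine ⟨⟨hbG, hmin⟩, fun τ hτ => ?_⟩
        rcases hlb τ hτ.1 with h | h
        · exact absurd hτ.2 h
        · exact h
    rw [this]
    refine MeasurableSet.inter ?_ ?_
    · exact MeasurableSet.biInter G.countable_toSet fun σ hσ =>
        measurableSet_le (hH b hbG) (hH σ hσ)
    · refine MeasurableSet.biInter G.countable_toSet fun τ hτ => ?_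
      refine MeasurableSet.union (MeasurableSet.compl ?_) ?_
      · have : {p | ∀ σ ∈ G, H p τ ≤ H p σ} = ⋂ σ ∈ (G : Set ℝ), {p | H p τ ≤ H p σ} := by
          ext p; simp
        rw [this]
        exact MeasurableSet.biInter G.countable_toSet fun σ hσ =>
          measurableSet_le (hH τ hτ) (hH σ hσ)
      · by_cases hbτ : b ≤ τ
        · have : {p : δ | b ≤ τ} = univ := by ext p; simp [hbτ]
          rw [this]; exact MeasurableSet.univ
        · have : {p : δ | b ≤ τ} = ∅ := by ext p; simp [hbτ]
          rw [this]; exact MeasurableSet.empty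
  · have : {p | sInf (Aset G H p) = b} = ∅ := by
      ext p
      simp only [mem_setOf_eq, mem_empty_iff_false, iff_false]
      intro h
      exact hbG (h ▸ (sInf_Aset_mem G H hG p).1)
    rw [this]; exact MeasurableSet.empty

end tauhatfacts

-- ### Chebyshev count bound

lemma cheb_count {Ω : Type*} [MeasurableSpace Ω] (P : Measure Ω) [IsProbabilityMeasure P]
    {E : Type*} [MeasurableSpace E]
    {mm : ℕ} (W : Fin mm → Ω → E) (hW : ∀ i, Measurable (W i))
    (hiid : iIndepFun W P)
    (ν : Measure E) [IsProbabilityMeasure ν] (hlaw : ∀ i, Measure.map (W i) P = ν)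
    {B : Set E} [DecidablePred (· ∈ B)] (hB : MeasurableSet B) {kk : ℕ} {r : ℝ} (hr : 0 < r)
    (hgap : (kk : ℝ) - 1 + r ≤ mm * (ν B).toReal) :
    P {ω | (Finset.univ.filter fun i => W i ω ∈ B).card < kk} ≤ ENNReal.ofReal (mm / r ^ 2) := by
  classical
  set p : ℝ := (ν B).toReal with hp
  set χ : Fin mm → Ω → ℝ := fun i => ((W i) ⁻¹' B).indicator (fun _ => (1:ℝ)) with hχ
  have hχmeas : ∀ i, Measurable (χ i) := fun i =>
    measurable_const.indicator ((hW i) hB)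
  have hχ2 : ∀ i, MemLp (χ i) 2 P := fun i =>
    memLp_indicator_const 2 ((hW i) hB) 1 (Or.inr (measure_ne_top _ _))
  have hχint : ∀ i, Integrable (χ i) P := fun i => (hχ2 i).integrable one_le_two
  have hχmean : ∀ i, ∫ ω, χ i ω ∂P = p := by
    intro i
    rw [hχ]
    simp only []
    rw [integral_indicator_const (1 : ℝ) ((hW i) hB)]
    rw [measureReal_def, ← Measure.map_apply (hW i) hB, hlaw i]
    simp [hp]
  have hχiid : iIndepFun χ P := by
    have : χ = fun i => (B.indicator (fun _ => (1:ℝ))) ∘ (W i) := by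
      funext i ω
      simp only [hχ, Function.comp_apply]
      by_cases h : W i ω ∈ B
      · simp [Set.indicator_apply, h]
      · simp [Set.indicator_apply, h]
    rw [this]
    exact hiid.comp _ (fun i => measurable_const.indicator hB)
  set N : Ω → ℝ := ∑ i : Fin mm, χ i with hN
  have hN2 : MemLp N 2 P := memLp_finset_sum' _ (fun i _ => hχ2 i)
  have hNmean : ∫ ω, N ω ∂P = mm * p := by
    rw [hN]
    simp only [Finset.sum_apply]
    rw [integral_finset_sum Finset.univ (fun i _ => hχint i)]
    simp [hχmean, Finset.sum_const, mul_comm]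
  have hNvar : variance N P ≤ mm := by
    rw [hN, IndepFun.variance_sum (fun i _ => hχ2 i)
      (fun i _ j _ hij => hχiid.indepFun hij)]
    have hle : ∀ i : Fin mm, variance (χ i) P ≤ 1 := by
      intro i
      refine le_trans (variance_le_expectation_sq (hχ2 i).aestronglyMeasurable) ?_
      have hsq : (χ i) ^ 2 = χ i := by
        funext ω
        simp only [Pi.pow_apply, hχ]
        by_cases h : ω ∈ (W i) ⁻¹' B
        · rw [indicator_of_mem h]; norm_num
        · rw [indicator_of_notMem h]; norm_num
      rw [hsq, hχmean i, hp]
      exact ENNReal.toReal_le_of_le_ofReal zero_le_one (by simpa using prob_le_one (μ := ν) (s := B))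
    calc ∑ i : Fin mm, variance (χ i) P ≤ ∑ _i : Fin mm, (1:ℝ) := Finset.sum_le_sum (fun i _ => hle i)
    _ = mm := by simp
  have hNcount : ∀ ω, N ω = ((Finset.univ.filter fun i => W i ω ∈ B).card : ℝ) := by
    intro ω
    rw [hN]
    simp only [Finset.sum_apply, hχ]
    rw [← Finset.sum_boole]
    apply Finset.sum_congr rfl
    intro i _
    by_cases h : W i ω ∈ B
    · simp [indicator_of_mem, h]
    · simp [indicator_of_notMem, h]
  have hsub : {ω | (Finset.univ.filter fun i => W i ω ∈ B).card < kk}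
      ⊆ {ω | r ≤ |N ω - ∫ ω', N ω' ∂P|} := by
    intro ω hω
    simp only [mem_setOf_eq] at hω ⊢
    have h1 : N ω ≤ (kk : ℝ) - 1 := by
      rw [hNcount ω]
      have h2 : (((Finset.univ.filter fun i => W i ω ∈ B).card : ℝ) + 1) ≤ kk := by
        exact_mod_cast hω
      linarith
    rw [hNmean]
    rw [abs_sub_comm, le_abs]
    left
    linarith
  calc P {ω | (Finset.univ.filter fun i => W i ω ∈ B).card < kk}
      ≤ P {ω | r ≤ |N ω - ∫ ω', N ω' ∂P|} := measure_mono hsub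
    _ ≤ ENNReal.ofReal (variance N P / r ^ 2) := meas_ge_le_variance_div_sq hN2 hr
    _ ≤ ENNReal.ofReal (mm / r ^ 2) :=
        ENNReal.ofReal_le_ofReal (div_le_div_of_nonneg_right hNvar (by positivity) |>.trans_eq rfl)

-- ### count set measurability

lemma measurableSet_count_lt {δ : Type*} [MeasurableSpace δ] {mm kk : ℕ}
    (cond : Fin mm → δ → Prop) [∀ i a, Decidable (cond i a)]
    (h : ∀ i, MeasurableSet {a | cond i a}) :
    MeasurableSet {a | (Finset.univ.filter fun i => cond i a).card < kk} := by
  have heq : {a | kk ≤ (Finset.univ.filter fun i => cond i a).card} =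
      ⋃ I ∈ {I : Finset (Fin mm) | I.card = kk}, ⋂ i ∈ (I : Set (Fin mm)), {a | cond i a} := by
    ext a
    simp only [mem_setOf_eq, mem_iUnion, mem_iInter, Finset.mem_coe]
    constructor
    · intro hcard
      obtain ⟨I, hIsub, hIcard⟩ := Finset.exists_subset_card_eq hcard
      exact ⟨I, hIcard, fun i hi => (Finset.mem_filter.1 (hIsub hi)).2⟩
    · rintro ⟨I, hIcard, hI⟩
      calc kk = I.card := hIcard.symm
      _ ≤ (Finset.univ.filter fun i => cond i a).card :=
          Finset.card_le_card fun i hi => Finset.mem_filter.2 ⟨Finset.mem_univ i, hI i hi⟩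
  have : {a | (Finset.univ.filter fun i => cond i a).card < kk} =
      {a | kk ≤ (Finset.univ.filter fun i => cond i a).card}ᶜ := by
    ext a; simp [not_le]
  rw [this, heq]
  refine MeasurableSet.compl ?_
  refine MeasurableSet.biUnion (to_countable _) fun I _ => ?_
  exact MeasurableSet.biInter (I : Set (Fin mm)).to_countable fun i _ => h i

-- ### key O_p lemma

set_option maxHeartbeats 1600000 in
lemma keyLemma {𝒳 : Type*} [MeasurableSpace 𝒳] (α ε : ℝ) (hα : α ∈ Ioo (0:ℝ) 1)
    (hε : ε ∈ Ioo (0:ℝ) (α / 2))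
    (PX : Measure 𝒳) [IsProbabilityMeasure PX]
    (κ : Kernel 𝒳 ℝ) [IsMarkovKernel κ]
    (f : 𝒳 → ℝ → ℝ)
    (hdens : ∀ x, κ x = MeasureTheory.volume.withDensity fun y => ENNReal.ofReal (f x y))
    (t c : ℝ) (ht : 0 < t) (hc : 0 < c)
    (hLD : ∀ x, ∀ τ ∈ Icc ε (α - ε), ∀ y : ℝ,
      (|y - cq κ τ x| ≤ t ∨ |y - cq κ (1 - α + τ) x| ≤ t) → c ≤ f x y)
    (m : ℕ → ℕ) (hm : Tendsto m atTop atTop)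
    (G : ℕ → Finset ℝ) (hGsub : ∀ n, ↑(G n) ⊆ Icc ε (α - ε))
    {Ω : Type*} [MeasurableSpace Ω] (P : Measure Ω) [IsProbabilityMeasure P]
    {Θ : Type*} [MeasurableSpace Θ] (θ : ℕ → Ω → Θ) (hθm : ∀ n, Measurable (θ n))
    (e : ℕ → Θ → ℝ) (hem : ∀ n, Measurable (e n)) (hepos : ∀ n s, 0 ≤ e n s)
    (Z : (n : ℕ) → Fin (m n) → Ω → 𝒳 × ℝ) (hZm : ∀ n i, Measurable (Z n i))
    (hiid : ∀ n, iIndepFun (Z n) P)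
    (hlaw : ∀ n i, Measure.map (Z n i) P = PX ⊗ₘ κ)
    (hindep : ∀ n, IndepFun (θ n) (fun ω => fun i => Z n i ω) P)
    (k : ℕ → ℕ) (hk : ∀ n, k n = ⌈((m n : ℝ) + 1) * (1 - α)⌉₊)
    (sc : (n : ℕ) → Θ → 𝒳 × ℝ → ℝ) (g : (n : ℕ) → Θ → 𝒳 → ℝ)
    (hscm : ∀ n, Measurable fun q : Θ × (𝒳 × ℝ) => sc n q.1 q.2)
    (hgm : ∀ n s, Measurable (g n s))
    (hgmem : ∀ n s x, g n s x ∈ G n)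
    (hscnn : ∀ n s p, 0 ≤ sc n s p)
    (hsand : ∀ n s x y, sc n s (x, y) ≤
      max (max (cq κ (g n s x) x - y) (y - cq κ (1 - α + g n s x) x)) 0 + e n s) :
    ∀ δ : ℝ, 0 < δ → ∃ C : ℝ, 0 < C ∧ ∀ᶠ n in atTop,
      P {ω | C * (e n (θ n ω) + 1 / Real.sqrt (m n)) <
        kthSmallest (m n) (fun i => sc n (θ n ω) (Z n i ω)) (k n)} < ENNReal.ofReal δ := by
  classical
  obtain ⟨hα0, hα1⟩ := hα
  obtain ⟨hε0, hεα⟩ := hε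
  intro δ hδ
  set C : ℝ := max 1 (Real.sqrt (8 / (c ^ 2 * δ))) with hC
  have hC1 : (1:ℝ) ≤ C := le_max_left _ _
  have hC0 : 0 < C := lt_of_lt_of_le one_pos hC1
  have hC2 : 8 / (c ^ 2 * δ) ≤ C ^ 2 := by
    have h1 : Real.sqrt (8 / (c ^ 2 * δ)) ≤ C := le_max_right _ _
    have h2 : 0 ≤ 8 / (c ^ 2 * δ) := by positivity
    nlinarith [Real.sq_sqrt h2, Real.sqrt_nonneg (8 / (c ^ 2 * δ)),
      sq_nonneg (C - Real.sqrt (8 / (c ^ 2 * δ)))]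
  have hfrac : 4 / (c ^ 2 * C ^ 2) ≤ δ / 2 := by
    have h3 : (0:ℝ) < c ^ 2 * δ := by positivity
    have hkey : 8 ≤ c ^ 2 * δ * C ^ 2 := by
      have h8 : c ^ 2 * δ * (8 / (c ^ 2 * δ)) = 8 := by field_simp
      nlinarith [mul_le_mul_of_nonneg_left hC2 h3.le]
    rw [div_le_div_iff₀ (by positivity) (by norm_num)]
    nlinarith
  refine ⟨C, hC0, ?_⟩
  -- eventual regime
  have hev : ∀ᶠ n in atTop, 1 ≤ m n ∧ C / Real.sqrt (m n) ≤ t ∧ 2 ≤ c * C * Real.sqrt (m n) := by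
    set R : ℝ := max ((C / t) ^ 2) ((2 / (c * C)) ^ 2) + 1 with hR
    have hR1 : (1:ℝ) ≤ R := by
      rw [hR]
      have : (0:ℝ) ≤ max ((C / t) ^ 2) ((2 / (c * C)) ^ 2) :=
        le_trans (sq_nonneg _) (le_max_left _ _)
      linarith
    filter_upwards [hm.eventually (eventually_ge_atTop ⌈R⌉₊)] with n hn
    have hmR : R ≤ (m n : ℝ) := le_trans (Nat.le_ceil R) (by exact_mod_cast hn)
    have hm1 : 1 ≤ m n := by
      by_contra h
      push_neg at h
      interval_cases hmn : m n
      · simp [hmn] at hmR; linarith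
    have hms : Real.sqrt R ≤ Real.sqrt (m n) := Real.sqrt_le_sqrt hmR
    have hs1 : C / t ≤ Real.sqrt (m n) := by
      have : C / t ≤ Real.sqrt ((C / t) ^ 2) := by
        rw [Real.sqrt_sq (by positivity)]
      refine le_trans this (le_trans (Real.sqrt_le_sqrt ?_) hms)
      rw [hR]
      exact le_trans (le_max_left _ _) (by linarith)
    have hs2 : 2 / (c * C) ≤ Real.sqrt (m n) := by
      have : 2 / (c * C) ≤ Real.sqrt ((2 / (c * C)) ^ 2) := by
        rw [Real.sqrt_sq (by positivity)]
      refine le_trans this (le_trans (Real.sqrt_le_sqrt ?_) hms)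
      rw [hR]
      exact le_trans (le_max_right _ _) (by linarith)
    have hsqpos : 0 < Real.sqrt (m n) := by
      apply Real.sqrt_pos.2
      exact_mod_cast lt_of_lt_of_le zero_lt_one (by exact_mod_cast hm1)
    refine ⟨hm1, ?_, ?_⟩
    · rw [div_le_iff₀ hsqpos]
      calc C = t * (C / t) := by field_simp
      _ ≤ t * Real.sqrt (m n) := mul_le_mul_of_nonneg_left hs1 ht.le
    · have := mul_le_mul_of_nonneg_left hs2 (by positivity : (0:ℝ) ≤ c * C)
      rw [mul_div_cancel₀] at this
      · linarith [this]
      · positivity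
  filter_upwards [hev] with n hn
  obtain ⟨hm1, hΔt, hcC2⟩ := hn
  set mm := m n with hmm
  set kk := k n with hkk
  have hsqpos : 0 < Real.sqrt mm := Real.sqrt_pos.2 (by exact_mod_cast lt_of_lt_of_le zero_lt_one (by exact_mod_cast hm1))
  set Δ : ℝ := C / Real.sqrt mm with hΔ
  have hΔpos : 0 < Δ := by positivity
  have hk1 : 1 ≤ kk := by
    rw [hkk, hk n]
    rw [Nat.one_le_iff_ne_zero, ← Nat.pos_iff_ne_zero]
    apply Nat.ceil_pos.2
    have : (0:ℝ) < (mm : ℝ) + 1 := by positivity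
    nlinarith
  -- the Bernoulli success set for a training outcome s
  set ν : Measure (𝒳 × ℝ) := PX ⊗ₘ κ with hν
  haveI : IsProbabilityMeasure ν := by
    constructor
    rw [hν, Measure.compProd_apply_univ, measure_univ]
  set B : Θ → Set (𝒳 × ℝ) := fun s => {q | sc n s q ≤ e n s + Δ} with hB
  have hBmeas : ∀ s, MeasurableSet (B s) := by
    intro s
    have h1 : Measurable fun q : 𝒳 × ℝ => sc n s q :=
      (hscm n).comp measurable_prodMk_left
    exact measurableSet_le h1 measurable_const
  -- lower bound on ν (B s)
  have hp : ∀ s, 1 - α + c * Δ ≤ (ν (B s)).toReal := by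
    intro s
    set lo : 𝒳 → ℝ := fun x => cq κ (g n s x) x - Δ with hlo
    set hi : 𝒳 → ℝ := fun x => cq κ (1 - α + g n s x) x + Δ with hhi
    have hlom : Measurable lo := by
      apply Measurable.sub_const
      apply meas_piecewise (G n) (g n s) (hgmem n s) (hgm n s) (fun b x => cq κ b x)
      intro b hb
      have hbI := hGsub n hb
      exact measurable_cq κ (lt_of_lt_of_le hε0 hbI.1)
        (lt_of_le_of_lt hbI.2 (by linarith))
    have hhim : Measurable hi := by
      apply Measurable.add_const
      apply meas_piecewise (G n) (g n s) (hgmem n s) (hgm n s) (fun b x => cq κ (1 - α + b) x)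
      intro b hb
      have hbI := hGsub n hb
      exact measurable_cq κ (by linarith [hbI.1] : (0:ℝ) < 1 - α + b)
        (by linarith [hbI.2] : 1 - α + b < 1)
    set D : Set (𝒳 × ℝ) := {q | lo q.1 < q.2 ∧ q.2 ≤ hi q.1} with hD
    have hDmeas : MeasurableSet D :=
      (measurableSet_lt (hlom.comp measurable_fst) measurable_snd).inter
        (measurableSet_le measurable_snd (hhim.comp measurable_fst))
    have hDsub : D ⊆ B s := by
      rintro ⟨x, y⟩ ⟨h1, h2⟩
      simp only [hB, mem_setOf_eq]
      refine le_trans (hsand n s x y) ?_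
      rw [add_comm (e n s) Δ]
      apply add_le_add_left
      apply max_le (max_le ?_ ?_) hΔpos.le
      · simp only [hlo] at h1; linarith
      · simp only [hhi] at h2; linarith
    have hκx : ∀ x, ENNReal.ofReal (1 - α + c * Δ) ≤ (κ x) (Ioc (lo x) (hi x)) := by
      intro x
      set τ : ℝ := g n s x with hτ
      have hτI : τ ∈ Icc ε (α - ε) := hGsub n (hgmem n s x)
      have hFhi : 1 - α + τ + c * Δ / 2 ≤ ((κ x) (Iic (cq κ (1 - α + τ) x + Δ))).toReal :=
        F_ge_add κ f x (hdens x) (by linarith [hτI.2] : 1 - α + τ < 1) hc hΔpos hΔt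
          (fun y hy => hLD x τ hτI y (Or.inr hy))
      have hFlo : ((κ x) (Iic (cq κ τ x - Δ))).toReal ≤ τ - c * Δ / 2 :=
        F_sub_le κ f x (hdens x) (lt_of_lt_of_le hε0 hτI.1) hc hΔpos hΔt
          (fun y hy => hLD x τ hτI y (Or.inl hy))
      have hsub' : Iic (hi x) ⊆ Ioc (lo x) (hi x) ∪ Iic (lo x) := by
        intro y hy
        rcases le_or_gt y (lo x) with h | h
        · exact Or.inr h
        · exact Or.inl ⟨h, hy⟩
      have h5 : ((κ x) (Iic (hi x))).toReal ≤
          ((κ x) (Ioc (lo x) (hi x))).toReal + ((κ x) (Iic (lo x))).toReal := by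
        have hle : (κ x) (Iic (hi x)) ≤ (κ x) (Ioc (lo x) (hi x)) + (κ x) (Iic (lo x)) :=
          le_trans (measure_mono hsub') (measure_union_le _ _)
        have h6 := ENNReal.toReal_mono
          (ENNReal.add_ne_top.2 ⟨measure_ne_top _ _, measure_ne_top _ _⟩) hle
        rwa [ENNReal.toReal_add (measure_ne_top _ _) (measure_ne_top _ _)] at h6
      have h7 : 1 - α + c * Δ ≤ ((κ x) (Ioc (lo x) (hi x))).toReal := by
        have e1 : hi x = cq κ (1 - α + τ) x + Δ := rfl
        have e2 : lo x = cq κ τ x - Δ := rfl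
        rw [e1] at h5
        rw [e2] at h5
        linarith
      calc ENNReal.ofReal (1 - α + c * Δ) ≤ ENNReal.ofReal (((κ x) (Ioc (lo x) (hi x))).toReal) :=
          ENNReal.ofReal_le_ofReal h7
      _ = (κ x) (Ioc (lo x) (hi x)) := ENNReal.ofReal_toReal (measure_ne_top _ _)
    have hνD : ENNReal.ofReal (1 - α + c * Δ) ≤ ν D := by
      rw [hν, Measure.compProd_apply hDmeas]
      have hslice : ∀ x, (Prod.mk x ⁻¹' D) = Ioc (lo x) (hi x) := by
        intro x; ext y; simp [hD, mem_Ioc]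
      calc ENNReal.ofReal (1 - α + c * Δ)
          = ∫⁻ _, ENNReal.ofReal (1 - α + c * Δ) ∂PX := by
            rw [lintegral_const, measure_univ, mul_one]
      _ ≤ ∫⁻ x, (κ x) (Prod.mk x ⁻¹' D) ∂PX := by
            apply lintegral_mono
            intro x
            show ENNReal.ofReal (1 - α + c * Δ) ≤ (κ x) (Prod.mk x ⁻¹' D)
            rw [hslice x]
            exact hκx x
    have hνB : ENNReal.ofReal (1 - α + c * Δ) ≤ ν (B s) :=
      le_trans hνD (measure_mono hDsub)
    have := ENNReal.toReal_mono (measure_ne_top _ _) hνB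
    rwa [ENNReal.toReal_ofReal (by nlinarith [mul_pos hc hΔpos] : (0:ℝ) ≤ 1 - α + c * Δ)] at this
  -- per-s Chebyshev bound
  set r : ℝ := c * C * Real.sqrt mm / 2 with hr
  have hrpos : 0 < r := by positivity
  have hchb : ∀ s, P {ω | (Finset.univ.filter fun i => Z n i ω ∈ B s).card < kk}
      ≤ ENNReal.ofReal (δ / 2) := by
    intro s
    have hgap : (kk : ℝ) - 1 + r ≤ mm * (ν (B s)).toReal := by
      have h1 : (kk : ℝ) ≤ ((mm : ℝ) + 1) * (1 - α) + 1 := by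
        rw [hkk, hk n]
        exact le_of_lt (Nat.ceil_lt_add_one (by nlinarith [Nat.cast_nonneg (α := ℝ) mm]))
      have h2 : (mm : ℝ) * Δ = C * Real.sqrt mm := by
        rw [hΔ]
        rw [mul_div_assoc']
        rw [mul_comm (mm:ℝ) C, mul_div_assoc]
        congr 1
        exact Real.div_sqrt
      have h3 : (mm : ℝ) * (1 - α + c * Δ) ≤ mm * (ν (B s)).toReal :=
        mul_le_mul_of_nonneg_left (hp s) (Nat.cast_nonneg mm)
      have h4 : (mm : ℝ) * (1 - α + c * Δ) = mm * (1 - α) + c * (mm * Δ) := by ring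
      rw [h4, h2] at h3
      have h5 : (1:ℝ) - α ≤ 1 := by linarith
      rw [hr]
      linarith [hcC2]
    have hcheb := cheb_count P (fun i => Z n i) (fun i => hZm n i) (hiid n) ν
      (fun i => hlaw n i) (hBmeas s) hrpos hgap
    refine le_trans hcheb ?_
    apply ENNReal.ofReal_le_ofReal
    have hrsq : r ^ 2 = c ^ 2 * C ^ 2 * mm / 4 := by
      rw [hr]
      rw [div_pow]
      rw [mul_pow, mul_pow, Real.sq_sqrt (Nat.cast_nonneg mm)]
      norm_num
    have hmmpos : (0:ℝ) < mm := by exact_mod_cast lt_of_lt_of_le zero_lt_one (by exact_mod_cast hm1)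
    rw [hrsq]
    have h9 : (mm:ℝ) / (c ^ 2 * C ^ 2 * mm / 4) = 4 / (c ^ 2 * C ^ 2) := by
      field_simp [hmmpos.ne', hc.ne', hC0.ne']
    rw [h9]
    exact hfrac
  -- decompose the joint probability via independence
  set Zv : Ω → Fin mm → 𝒳 × ℝ := fun ω => fun i => Z n i ω with hZv
  have hZvm : Measurable Zv := measurable_pi_lambda _ (fun i => hZm n i)
  set E' : Set (Θ × (Fin mm → 𝒳 × ℝ)) :=
    {q | (Finset.univ.filter fun i => q.2 i ∈ B q.1).card < kk} with hE'
  have hE'meas : MeasurableSet E' := by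
    rw [hE']
    apply measurableSet_count_lt (fun i (q : Θ × (Fin mm → 𝒳 × ℝ)) => q.2 i ∈ B q.1)
    intro i
    have h1 : Measurable fun q : Θ × (Fin mm → 𝒳 × ℝ) => sc n q.1 (q.2 i) :=
      (hscm n).comp (measurable_fst.prodMk ((measurable_pi_apply i).comp measurable_snd))
    have h2 : Measurable fun q : Θ × (Fin mm → 𝒳 × ℝ) => e n q.1 + Δ :=
      ((hem n).comp measurable_fst).add_const Δ
    exact measurableSet_le h1 h2
  set V : Ω → Θ × (Fin mm → 𝒳 × ℝ) := fun ω => (θ n ω, Zv ω) with hV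
  have hVm : Measurable V := (hθm n).prodMk hZvm
  have hbadsub : {ω | C * (e n (θ n ω) + 1 / Real.sqrt mm) <
      kthSmallest mm (fun i => sc n (θ n ω) (Z n i ω)) kk} ⊆ V ⁻¹' E' := by
    intro ω hω
    simp only [mem_setOf_eq] at hω
    simp only [mem_preimage, hV, hE', mem_setOf_eq]
    by_contra hcount
    push_neg at hcount
    have hle : kthSmallest mm (fun i => sc n (θ n ω) (Z n i ω)) kk ≤
        e n (θ n ω) + Δ := by
      apply kthSmallest_le hk1 (fun i => hscnn n (θ n ω) (Z n i ω))
      refine le_trans hcount (le_of_eq ?_)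
      congr 1
    have : e n (θ n ω) + Δ ≤ C * (e n (θ n ω) + 1 / Real.sqrt mm) := by
      have he := hepos n (θ n ω)
      have : C * (e n (θ n ω) + 1 / Real.sqrt mm) = C * e n (θ n ω) + Δ := by
        rw [mul_add, hΔ]
        congr 1
        field_simp
      rw [this]
      nlinarith
    linarith
  haveI : IsProbabilityMeasure (Measure.map (θ n) P) :=
    Measure.isProbabilityMeasure_map (hθm n).aemeasurable
  haveI : IsProbabilityMeasure (Measure.map Zv P) :=
    Measure.isProbabilityMeasure_map hZvm.aemeasurable
  have hmapV : Measure.map V P = (Measure.map (θ n) P).prod (Measure.map Zv P) := by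
    have := (indepFun_iff_map_prod_eq_prod_map_map (hθm n).aemeasurable hZvm.aemeasurable).1
      (hindep n)
    exact this
  calc P {ω | C * (e n (θ n ω) + 1 / Real.sqrt mm) <
      kthSmallest mm (fun i => sc n (θ n ω) (Z n i ω)) kk}
      ≤ P (V ⁻¹' E') := measure_mono hbadsub
    _ = Measure.map V P E' := (Measure.map_apply hVm hE'meas).symm
    _ = ∫⁻ s, Measure.map Zv P (Prod.mk s ⁻¹' E') ∂(Measure.map (θ n) P) := by
        rw [hmapV, Measure.prod_apply hE'meas]
    _ ≤ ∫⁻ _, ENNReal.ofReal (δ / 2) ∂(Measure.map (θ n) P) := by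
        apply lintegral_mono
        intro s
        show Measure.map Zv P (Prod.mk s ⁻¹' E') ≤ ENNReal.ofReal (δ / 2)
        have hsl : (Prod.mk s ⁻¹' E') = {z : Fin mm → 𝒳 × ℝ |
            (Finset.univ.filter fun i => z i ∈ B s).card < kk} := rfl
        have hslm : MeasurableSet (Prod.mk s ⁻¹' E') := measurable_prodMk_left hE'meas
        rw [Measure.map_apply hZvm hslm]
        exact le_trans (le_of_eq (by congr 1)) (hchb s)
    _ = ENNReal.ofReal (δ / 2) := by
        rw [lintegral_const, measure_univ, mul_one]
    _ < ENNReal.ofReal δ := by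
        rw [ENNReal.ofReal_lt_ofReal_iff hδ]
        linarith


set_option maxHeartbeats 4000000 in
theorem stmt16 (α ε : ℝ) (hα : α ∈ Ioo (0:ℝ) 1) (hε : ε ∈ Ioo (0:ℝ) (α / 2))
    (PX : Measure 𝒳) [IsProbabilityMeasure PX]
    (κ : Kernel 𝒳 ℝ) [IsMarkovKernel κ]
    (f : 𝒳 → ℝ → ℝ)
    (hdens : ∀ x, κ x = MeasureTheory.volume.withDensity fun y => ENNReal.ofReal (f x y))
    -- local endpoint-density lower bound
    (t c : ℝ) (ht : 0 < t) (hc : 0 < c)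
    (hLD : ∀ x, ∀ τ ∈ Icc ε (α - ε), ∀ y : ℝ,
      (|y - cq κ τ x| ≤ t ∨ |y - cq κ (1 - α + τ) x| ≤ t) → c ≤ f x y)
    -- sequence of problems
    (m : ℕ → ℕ) (hm : Tendsto m atTop atTop)
    (G : ℕ → Finset ℝ) (hGne : ∀ n, (G n).Nonempty)
    (hGsub : ∀ n, ↑(G n) ⊆ Icc ε (α - ε)) (hG2 : ∀ n, α / 2 ∈ G n)
    -- training randomness and fitted quantile maps
    {Ω : Type*} [MeasurableSpace Ω] (P : Measure Ω) [IsProbabilityMeasure P]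
    {Θ : Type*} [MeasurableSpace Θ] (θ : ℕ → Ω → Θ) (hθm : ∀ n, Measurable (θ n))
    (qh : ℕ → Θ → ℝ → 𝒳 → ℝ)
    (hqhm : ∀ n γ, Measurable fun p : Θ × 𝒳 => qh n p.1 γ p.2)
    -- finite-grid endpoint error, converging to 0 in probability
    (e : ℕ → Θ → ℝ) (hem : ∀ n, Measurable (e n))
    (hebound : ∀ n (s : Θ) (x : 𝒳), ∀ γ ∈ (G n) ∪ (G n).image (fun g => 1 - α + g),
      |qh n s γ x - cq κ γ x| ≤ e n s)
    (hep : ∀ δ : ℝ, 0 < δ →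
      Tendsto (fun n => P {ω | δ < e n (θ n ω)}) atTop (nhds 0))
    -- i.i.d. calibration sample, independent of the training randomness
    (Z : (n : ℕ) → Fin (m n) → Ω → 𝒳 × ℝ) (hZm : ∀ n i, Measurable (Z n i))
    (hiid : ∀ n, iIndepFun (Z n) P)
    (hlaw : ∀ n i, Measure.map (Z n i) P = PX ⊗ₘ κ)
    (hindep : ∀ n, IndepFun (θ n) (fun ω => fun i => Z n i ω) P)
    -- conformal rank and the two radii
    (k : ℕ → ℕ) (hk : ∀ n, k n = ⌈((m n : ℝ) + 1) * (1 - α)⌉₊)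
    (Qta Qstd : ℕ → Ω → ℝ)
    (hQta : ∀ n ω, Qta n ω = kthSmallest (m n)
      (fun i => taScore α (G n) (qh n (θ n ω)) (Z n i ω)) (k n))
    (hQstd : ∀ n ω, Qstd n ω = kthSmallest (m n)
      (fun i => max (max (qh n (θ n ω) (α / 2) (Z n i ω).1 - (Z n i ω).2)
          ((Z n i ω).2 - qh n (θ n ω) (1 - α / 2) (Z n i ω).1)) 0) (k n)) :
    (∀ δ : ℝ, 0 < δ → ∃ C : ℝ, 0 < C ∧ ∀ᶠ n in atTop,
      P {ω | C * (e n (θ n ω) + 1 / Real.sqrt (m n)) < Qta n ω} < ENNReal.ofReal δ) ∧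
    (∀ δ : ℝ, 0 < δ → ∃ C : ℝ, 0 < C ∧ ∀ᶠ n in atTop,
      P {ω | C * (e n (θ n ω) + 1 / Real.sqrt (m n)) < Qstd n ω} < ENNReal.ofReal δ) ∧
    (∀ δ : ℝ, 0 < δ → ∃ C : ℝ, 0 < C ∧ ∀ᶠ n in atTop,
      P {ω | C * (e n (θ n ω) + 1 / Real.sqrt (m n)) < |Qta n ω - Qstd n ω|}
        < ENNReal.ofReal δ) ∧
    (∀ δ : ℝ, 0 < δ →
      Tendsto (fun n => P {ω | δ < |Qta n ω - Qstd n ω|}) atTop (nhds 0)) := by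
  classical
  obtain ⟨hα0, hα1⟩ := hα
  obtain ⟨hε0, hεα⟩ := hε
  have hX : Nonempty 𝒳 := by
    by_contra h
    rw [not_nonempty_iff] at h
    have h1 : PX univ = 1 := measure_univ
    rw [Set.univ_eq_empty_iff.2 h] at h1
    simp at h1
  have hepos : ∀ n s, 0 ≤ e n s := by
    intro n s
    obtain ⟨γ, hγ⟩ := hGne n
    obtain ⟨x⟩ := hX
    exact le_trans (abs_nonneg _) (hebound n s x γ (Finset.mem_union_left _ hγ))
  have hk1 : ∀ n, 1 ≤ k n := by
    intro n
    rw [hk n]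
    refine Nat.ceil_pos.2 ?_
    have h0 : (0:ℝ) ≤ (m n : ℝ) := Nat.cast_nonneg _
    nlinarith
  -- the tauhat infrastructure
  set H : ℕ → (Θ × 𝒳) → ℝ → ℝ := fun n p τ => qh n p.1 (1 - α + τ) p.2 - qh n p.1 τ p.2 with hH
  have hTmem : ∀ n (s : Θ) (x : 𝒳), tauhat α (G n) (qh n s) x ∈ G n := by
    intro n s x
    exact (sInf_Aset_mem (G n) (H n) (hGne n) (s, x)).1
  have hTm : ∀ n, Measurable fun p : Θ × 𝒳 => tauhat α (G n) (qh n p.1) p.2 := by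
    intro n
    have := measurable_sInf_Aset (G n) (H n) (hGne n)
      (fun τ _ => (hqhm n (1 - α + τ)).sub (hqhm n τ))
    exact this
  have pmapm : Measurable fun q : Θ × (𝒳 × ℝ) => (q.1, q.2.1) :=
    measurable_fst.prodMk (measurable_fst.comp measurable_snd)
  -- key lemma for the TA score
  have hTA := keyLemma α ε ⟨hα0, hα1⟩ ⟨hε0, hεα⟩ PX κ f hdens t c ht hc hLD m hm G hGsub
    P θ hθm e hem hepos Z hZm hiid hlaw hindep k hk
    (fun n s p => taScore α (G n) (qh n s) p)
    (fun n s x => tauhat α (G n) (qh n s) x)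
    (by
      intro n
      have hT2 : Measurable fun q : Θ × (𝒳 × ℝ) => tauhat α (G n) (qh n q.1) q.2.1 :=
        (hTm n).comp pmapm
      have hT2mem : ∀ q : Θ × (𝒳 × ℝ), tauhat α (G n) (qh n q.1) q.2.1 ∈ G n :=
        fun q => hTmem n q.1 q.2.1
      have hQlow : Measurable fun q : Θ × (𝒳 × ℝ) =>
          qh n q.1 (tauhat α (G n) (qh n q.1) q.2.1) q.2.1 := by
        apply meas_piecewise (G n) _ hT2mem hT2 (fun b q => qh n q.1 b q.2.1)
        intro b _
        exact (hqhm n b).comp pmapm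
      have hQhigh : Measurable fun q : Θ × (𝒳 × ℝ) =>
          qh n q.1 (1 - α + tauhat α (G n) (qh n q.1) q.2.1) q.2.1 := by
        apply meas_piecewise (G n) _ hT2mem hT2 (fun b q => qh n q.1 (1 - α + b) q.2.1)
        intro b _
        exact (hqhm n (1 - α + b)).comp pmapm
      exact ((hQlow.sub (measurable_snd.comp measurable_snd)).max
        ((measurable_snd.comp measurable_snd).sub hQhigh)).max measurable_const)
    (fun n s => (hTm n).comp measurable_prodMk_left)
    (fun n s x => hTmem n s x)
    (fun n s p => le_max_right _ _)
    (by
      intro n s x y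
      have hτ : tauhat α (G n) (qh n s) x ∈ G n := hTmem n s x
      have h1 := hebound n s x _ (Finset.mem_union_left _ hτ)
      have h2 := hebound n s x _ (Finset.mem_union_right _
        (Finset.mem_image_of_mem (fun g => 1 - α + g) hτ))
      rw [abs_le] at h1 h2
      have he := hepos n s
      show max (max (qh n s (tauhat α (G n) (qh n s) x) x - y)
          (y - qh n s (1 - α + tauhat α (G n) (qh n s) x) x)) 0 ≤ _
      apply max_le (max_le ?_ ?_) ?_
      · refine le_trans (show qh n s (tauhat α (G n) (qh n s) x) x - y ≤
          (cq κ (tauhat α (G n) (qh n s) x) x - y) + e n s by linarith [h1.1, h1.2]) ?_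
        exact add_le_add_left (le_trans (le_max_left _ _) (le_max_left _ _)) _
      · refine le_trans (show y - qh n s (1 - α + tauhat α (G n) (qh n s) x) x ≤
          (y - cq κ (1 - α + tauhat α (G n) (qh n s) x) x) + e n s by linarith [h2.1, h2.2]) ?_
        exact add_le_add_left (le_trans (le_max_right _ _) (le_max_left _ _)) _
      · exact add_nonneg (le_max_right _ _) he)
  -- key lemma for the standard score
  have hStd := keyLemma α ε ⟨hα0, hα1⟩ ⟨hε0, hεα⟩ PX κ f hdens t c ht hc hLD m hm G hGsub
    P θ hθm e hem hepos Z hZm hiid hlaw hindep k hk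
    (fun n s p => max (max (qh n s (α / 2) p.1 - p.2) (p.2 - qh n s (1 - α / 2) p.1)) 0)
    (fun n s x => α / 2)
    (by
      intro n
      exact ((((hqhm n (α / 2)).comp pmapm).sub (measurable_snd.comp measurable_snd)).max
        ((measurable_snd.comp measurable_snd).sub ((hqhm n (1 - α / 2)).comp pmapm))).max
        measurable_const)
    (fun n s => measurable_const)
    (fun n s x => hG2 n)
    (fun n s p => le_max_right _ _)
    (by
      intro n s x y
      have h1 := hebound n s x _ (Finset.mem_union_left _ (hG2 n))
      have h2 := hebound n s x _ (Finset.mem_union_right _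
        (Finset.mem_image_of_mem (fun g => 1 - α + g) (hG2 n)))
      rw [abs_le] at h1 h2
      have he := hepos n s
      have h12 : qh n s (1 - α / 2) x = qh n s (1 - α + α / 2) x := by
        rw [show (1:ℝ) - α / 2 = 1 - α + α / 2 by ring]
      show max (max (qh n s (α / 2) x - y) (y - qh n s (1 - α / 2) x)) 0 ≤ _
      rw [h12]
      apply max_le (max_le ?_ ?_) ?_
      · refine le_trans (show qh n s (α / 2) x - y ≤
          (cq κ (α / 2) x - y) + e n s by linarith [h1.1, h1.2]) ?_
        exact add_le_add_left (le_trans (le_max_left _ _) (le_max_left _ _)) _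
      · refine le_trans (show y - qh n s (1 - α + α / 2) x ≤
          (y - cq κ (1 - α + α / 2) x) + e n s by linarith [h2.1, h2.2]) ?_
        exact add_le_add_left (le_trans (le_max_right _ _) (le_max_left _ _)) _
      · exact add_nonneg (le_max_right _ _) he)
  -- transfer to the radii
  have P1 : ∀ δ : ℝ, 0 < δ → ∃ C : ℝ, 0 < C ∧ ∀ᶠ n in atTop,
      P {ω | C * (e n (θ n ω) + 1 / Real.sqrt (m n)) < Qta n ω} < ENNReal.ofReal δ := by
    intro δ hδ
    obtain ⟨C, hC, hev⟩ := hTA δ hδ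
    refine ⟨C, hC, ?_⟩
    filter_upwards [hev] with n h
    have hseteq : {ω | C * (e n (θ n ω) + 1 / Real.sqrt (m n)) < Qta n ω} =
        {ω | C * (e n (θ n ω) + 1 / Real.sqrt (m n)) < kthSmallest (m n)
          (fun i => taScore α (G n) (qh n (θ n ω)) (Z n i ω)) (k n)} := by
      ext ω; rw [mem_setOf_eq, mem_setOf_eq, hQta n ω]
    rw [hseteq]
    exact h
  have P2 : ∀ δ : ℝ, 0 < δ → ∃ C : ℝ, 0 < C ∧ ∀ᶠ n in atTop,
      P {ω | C * (e n (θ n ω) + 1 / Real.sqrt (m n)) < Qstd n ω} < ENNReal.ofReal δ := by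
    intro δ hδ
    obtain ⟨C, hC, hev⟩ := hStd δ hδ
    refine ⟨C, hC, ?_⟩
    filter_upwards [hev] with n h
    have hseteq : {ω | C * (e n (θ n ω) + 1 / Real.sqrt (m n)) < Qstd n ω} =
        {ω | C * (e n (θ n ω) + 1 / Real.sqrt (m n)) < kthSmallest (m n)
          (fun i => max (max (qh n (θ n ω) (α / 2) (Z n i ω).1 - (Z n i ω).2)
            ((Z n i ω).2 - qh n (θ n ω) (1 - α / 2) (Z n i ω).1)) 0) (k n)} := by
      ext ω; rw [mem_setOf_eq, mem_setOf_eq, hQstd n ω]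
    rw [hseteq]
    exact h
  have hQtann : ∀ n ω, 0 ≤ Qta n ω := by
    intro n ω
    rw [hQta n ω]
    exact kthSmallest_nonneg (hk1 n) (fun i => le_max_right _ _)
  have hQstdnn : ∀ n ω, 0 ≤ Qstd n ω := by
    intro n ω
    rw [hQstd n ω]
    exact kthSmallest_nonneg (hk1 n) (fun i => le_max_right _ _)
  have P3 : ∀ δ : ℝ, 0 < δ → ∃ C : ℝ, 0 < C ∧ ∀ᶠ n in atTop,
      P {ω | C * (e n (θ n ω) + 1 / Real.sqrt (m n)) < |Qta n ω - Qstd n ω|}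
        < ENNReal.ofReal δ := by
    intro δ hδ
    obtain ⟨C1, hC1, h1⟩ := P1 (δ / 2) (half_pos hδ)
    obtain ⟨C2, hC2, h2⟩ := P2 (δ / 2) (half_pos hδ)
    refine ⟨C1 + C2, by positivity, ?_⟩
    filter_upwards [h1, h2] with n h1n h2n
    have hsub : {ω | (C1 + C2) * (e n (θ n ω) + 1 / Real.sqrt (m n)) < |Qta n ω - Qstd n ω|}
        ⊆ {ω | C1 * (e n (θ n ω) + 1 / Real.sqrt (m n)) < Qta n ω} ∪
          {ω | C2 * (e n (θ n ω) + 1 / Real.sqrt (m n)) < Qstd n ω} := by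
      intro ω hω
      rw [mem_setOf_eq] at hω
      by_contra hcon
      rw [mem_union] at hcon
      push_neg at hcon
      rw [mem_setOf_eq, not_lt, mem_setOf_eq, not_lt] at hcon
      have habs : |Qta n ω - Qstd n ω| ≤ Qta n ω + Qstd n ω := by
        refine le_trans (abs_sub _ _) ?_
        rw [abs_of_nonneg (hQtann n ω), abs_of_nonneg (hQstdnn n ω)]
      have : |Qta n ω - Qstd n ω| ≤ (C1 + C2) * (e n (θ n ω) + 1 / Real.sqrt (m n)) := by
        calc |Qta n ω - Qstd n ω| ≤ Qta n ω + Qstd n ω := habs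
        _ ≤ C1 * (e n (θ n ω) + 1 / Real.sqrt (m n)) +
            C2 * (e n (θ n ω) + 1 / Real.sqrt (m n)) := add_le_add hcon.1 hcon.2
        _ = (C1 + C2) * (e n (θ n ω) + 1 / Real.sqrt (m n)) := by ring
      linarith
    calc P {ω | (C1 + C2) * (e n (θ n ω) + 1 / Real.sqrt (m n)) < |Qta n ω - Qstd n ω|}
        ≤ P ({ω | C1 * (e n (θ n ω) + 1 / Real.sqrt (m n)) < Qta n ω} ∪
          {ω | C2 * (e n (θ n ω) + 1 / Real.sqrt (m n)) < Qstd n ω}) := measure_mono hsub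
      _ ≤ P {ω | C1 * (e n (θ n ω) + 1 / Real.sqrt (m n)) < Qta n ω} +
          P {ω | C2 * (e n (θ n ω) + 1 / Real.sqrt (m n)) < Qstd n ω} := measure_union_le _ _
      _ < ENNReal.ofReal (δ / 2) + ENNReal.ofReal (δ / 2) := ENNReal.add_lt_add h1n h2n
      _ = ENNReal.ofReal δ := by
          rw [← ENNReal.ofReal_add (by linarith) (by linarith)]
          norm_num
  refine ⟨P1, P2, P3, ?_⟩
  -- part 4
  intro δ0 hδ0
  rw [ENNReal.tendsto_atTop_zero]
  intro ε' hε'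
  rcases eq_or_ne ε' ⊤ with hT | hT
  · exact ⟨0, fun n _ => hT ▸ le_top⟩
  have hε'pos : 0 < ε'.toReal := ENNReal.toReal_pos hε'.ne' hT
  set δ'' : ℝ := min 1 ε'.toReal with hδ''
  have hδ''pos : 0 < δ'' := lt_min one_pos hε'pos
  obtain ⟨C, hC, hev3⟩ := P3 (δ'' / 2) (half_pos hδ''pos)
  have hev4 : ∀ᶠ n in atTop, P {ω | δ0 / (4 * C) < e n (θ n ω)} < ENNReal.ofReal (δ'' / 2) :=
    (hep (δ0 / (4 * C)) (by positivity)).eventually_lt_const (by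
      simp [ENNReal.ofReal_pos, half_pos hδ''pos])
  have hev5 : ∀ᶠ n in atTop, C / Real.sqrt (m n) ≤ δ0 / 2 := by
    filter_upwards [hm.eventually (eventually_ge_atTop ⌈(2 * C / δ0) ^ 2⌉₊)] with n hn
    have hmR : ((2 * C / δ0) ^ 2 : ℝ) ≤ (m n : ℝ) :=
      le_trans (Nat.le_ceil _) (by exact_mod_cast hn)
    have hs : 2 * C / δ0 ≤ Real.sqrt (m n) := by
      have : 2 * C / δ0 ≤ Real.sqrt ((2 * C / δ0) ^ 2) := by
        rw [Real.sqrt_sq (by positivity)]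
      exact le_trans this (Real.sqrt_le_sqrt hmR)
    have hsqpos : 0 < Real.sqrt (m n) := lt_of_lt_of_le (by positivity) hs
    rw [div_le_iff₀ hsqpos]
    calc C = (δ0 / 2) * (2 * C / δ0) := by field_simp
    _ ≤ (δ0 / 2) * Real.sqrt (m n) := mul_le_mul_of_nonneg_left hs (by positivity)
  have hcomb : ∀ᶠ n in atTop, P {ω | δ0 < |Qta n ω - Qstd n ω|} ≤ ε' := by
    filter_upwards [hev3, hev4, hev5] with n h3 h4 h5
    have hsub : {ω | δ0 < |Qta n ω - Qstd n ω|} ⊆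
        {ω | C * (e n (θ n ω) + 1 / Real.sqrt (m n)) < |Qta n ω - Qstd n ω|} ∪
        {ω | δ0 / (4 * C) < e n (θ n ω)} := by
      intro ω hω
      rw [mem_setOf_eq] at hω
      rw [mem_union, mem_setOf_eq, mem_setOf_eq]
      by_contra hcon
      push_neg at hcon
      obtain ⟨hc1, hc2⟩ := hcon
      have h6 : |Qta n ω - Qstd n ω| ≤ C * (e n (θ n ω) + 1 / Real.sqrt (m n)) := hc1
      have h7 : C * (1 / Real.sqrt (m n)) = C / Real.sqrt (m n) := by ring
      have h8 : δ0 < C * e n (θ n ω) + C / Real.sqrt (m n) := by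
        calc δ0 < |Qta n ω - Qstd n ω| := hω
        _ ≤ C * (e n (θ n ω) + 1 / Real.sqrt (m n)) := h6
        _ = C * e n (θ n ω) + C / Real.sqrt (m n) := by ring
      have h9 : δ0 / 2 < C * e n (θ n ω) := by linarith
      have h10 : δ0 / (2 * C) < e n (θ n ω) := by
        rw [div_lt_iff₀ (by positivity)]
        calc δ0 = 2 * (δ0 / 2) := by ring
        _ < 2 * (C * e n (θ n ω)) := by linarith
        _ = e n (θ n ω) * (2 * C) := by ring
      have h11 : δ0 / (4 * C) < δ0 / (2 * C) := by
        apply div_lt_div_of_pos_left hδ0 (by positivity)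
        linarith
      linarith
    calc P {ω | δ0 < |Qta n ω - Qstd n ω|}
        ≤ P ({ω | C * (e n (θ n ω) + 1 / Real.sqrt (m n)) < |Qta n ω - Qstd n ω|} ∪
          {ω | δ0 / (4 * C) < e n (θ n ω)}) := measure_mono hsub
      _ ≤ P {ω | C * (e n (θ n ω) + 1 / Real.sqrt (m n)) < |Qta n ω - Qstd n ω|} +
          P {ω | δ0 / (4 * C) < e n (θ n ω)} := measure_union_le _ _
      _ ≤ ENNReal.ofReal (δ'' / 2) + ENNReal.ofReal (δ'' / 2) := add_le_add h3.le h4.le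
      _ = ENNReal.ofReal δ'' := by
          rw [← ENNReal.ofReal_add (by linarith) (by linarith)]
          norm_num
      _ ≤ ε' := by
          calc ENNReal.ofReal δ'' ≤ ENNReal.ofReal ε'.toReal :=
              ENNReal.ofReal_le_ofReal (min_le_right _ _)
          _ = ε' := ENNReal.ofReal_toReal hT
  obtain ⟨N, hN⟩ := eventually_atTop.1 hcomb
  exact ⟨N, hN⟩
end
end
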